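/- arXiv:1010.4322 — 7 statements merged into one kernel-verified Lean document; each statement's English description precedes it below -/
import Mathlib

section
/- Let $\mathcal{G}$ be a sub-$\sigma$-algebra and let $\tilde{v} : L^0_{++}(\mathcal{G}) \to L^0(\mathcal{G})$ be strictly $\mathcal{G}$-convex, with conjugate $\tilde{u}(\xi) = \operatorname{essinf}_{\eta} (\tilde{v}(\eta) + \xi\eta)$. If $\eta_1 \neq \eta_2$ in $L^0_{++}(\mathcal{G})$ (they differ on a set of positive measure), then the subdifferentials $\partial\tilde{v}(\eta_1)$ and $\partial\tilde{v}(\eta_2)$ are disjoint; consequently the superdifferential of $\tilde{u}$ is single-valued wherever nonempty, i.e., $\tilde{u}$ is differentiable. -/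
open MeasureTheory Filter
open scoped ENNReal Topology

/-- `f ∈ L⁰₊₊(G)`: `f` is `G`-measurable and a.s. strictly positive. -/
def Lpp {Ω : Type*} [MeasurableSpace Ω] (G : MeasurableSpace Ω) (P : Measure Ω)
    (f : Ω → ℝ) : Prop :=
  Measurable[G] f ∧ ∀ᵐ ω ∂P, 0 < f ω

/-- `zs ∈ ∂ṽ(z)`: `zs ∈ -L⁰₊₊(𝒢)` and `ṽ(η) ≥ ṽ(z) + zs·(η - z)` a.s. for all `η ∈ L⁰₊₊(𝒢)`. -/
def SubDiffMem {Ω : Type*} [MeasurableSpace Ω] (G : MeasurableSpace Ω) (P : Measure Ω)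
    (v : (Ω → ℝ) → Ω → ℝ) (z zs : Ω → ℝ) : Prop :=
  Measurable[G] zs ∧ (∀ᵐ ω ∂P, zs ω < 0) ∧
    ∀ η, Lpp G P η → ∀ᵐ ω ∂P, v z ω + zs ω * (η ω - z ω) ≤ v η ω

/-- `η` belongs to the superdifferential of `ũ` at `ξ`. -/
def SuperDiffMem {Ω : Type*} [MeasurableSpace Ω] (G : MeasurableSpace Ω) (P : Measure Ω)
    (u : (Ω → ℝ) → Ω → ℝ) (ξ η : Ω → ℝ) : Prop :=
  Measurable[G] η ∧ (∀ᵐ ω ∂P, 0 < η ω) ∧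
    ∀ ξ', Lpp G P ξ' → ∀ᵐ ω ∂P, u ξ' ω ≤ u ξ ω + η ω * (ξ' ω - ξ ω)

/-- If `ṽ` is strictly `𝒢`-convex with conjugate `ũ(ξ) = essinf_η (ṽ(η) + ξη)`, then the
subdifferentials of `ṽ` at points differing on a set of positive measure are disjoint;
consequently the superdifferential of `ũ` is single-valued wherever nonempty, i.e. `ũ` is
differentiable. -/
theorem stmt6 {Ω : Type*} [F : MeasurableSpace Ω] (G : MeasurableSpace Ω) (hG : G ≤ F)
    (P : Measure Ω) [IsProbabilityMeasure P]
    (v u : (Ω → ℝ) → Ω → ℝ)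
    -- ṽ is 𝒢-convex …
    (hconv : ∀ g η₁ η₂ : Ω → ℝ, Measurable[G] g → (∀ ω, 0 ≤ g ω ∧ g ω ≤ 1) →
      Lpp G P η₁ → Lpp G P η₂ →
      ∀ᵐ ω ∂P, v (fun ω' => g ω' * η₁ ω' + (1 - g ω') * η₂ ω') ω ≤
        g ω * v η₁ ω + (1 - g ω) * v η₂ ω)
    -- … strictly: strict inequality on a nonnegligible set where 0 < g < 1 and η₁ ≠ η₂
    (hstrict : ∀ g η₁ η₂ : Ω → ℝ, Measurable[G] g → (∀ ω, 0 ≤ g ω ∧ g ω ≤ 1) →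
      Lpp G P η₁ → Lpp G P η₂ →
      0 < P {ω | 0 < g ω ∧ g ω < 1 ∧ η₁ ω ≠ η₂ ω} →
      0 < P {ω | v (fun ω' => g ω' * η₁ ω' + (1 - g ω') * η₂ ω') ω <
        g ω * v η₁ ω + (1 - g ω) * v η₂ ω})
    -- ũ is the conjugate of ṽ: ũ(ξ) = essinf_η (ṽ(η) + ξη)
    (hu_lb : ∀ ξ η, Lpp G P ξ → Lpp G P η → ∀ᵐ ω ∂P, u ξ ω ≤ v η ω + ξ ω * η ω)
    (hu_glb : ∀ ξ, Lpp G P ξ → ∀ w : Ω → ℝ, Measurable[G] w →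
      (∀ η, Lpp G P η → ∀ᵐ ω ∂P, w ω ≤ v η ω + ξ ω * η ω) → ∀ᵐ ω ∂P, w ω ≤ u ξ ω)
    -- the superdifferential of ũ is `-(∂ṽ)⁻¹`
    (hlink : ∀ ξ η, Lpp G P ξ → Lpp G P η →
      (SuperDiffMem G P u ξ η ↔ SubDiffMem G P v η (fun ω => -ξ ω))) :
    (∀ η₁ η₂, Lpp G P η₁ → Lpp G P η₂ → ¬ (η₁ =ᵐ[P] η₂) →
      ∀ zs : Ω → ℝ, SubDiffMem G P v η₁ zs → SubDiffMem G P v η₂ zs → False) ∧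
    (∀ ξ, Lpp G P ξ → ∀ η η' : Ω → ℝ,
      SuperDiffMem G P u ξ η → SuperDiffMem G P u ξ η' → η =ᵐ[P] η') := by

  have part1 : ∀ η₁ η₂, Lpp G P η₁ → Lpp G P η₂ → ¬ (η₁ =ᵐ[P] η₂) →
      ∀ zs : Ω → ℝ, SubDiffMem G P v η₁ zs → SubDiffMem G P v η₂ zs → False := by
    intro η₁ η₂ h1 h2 hne zs hs1 hs2
    set g : Ω → ℝ := fun _ => (1 : ℝ) / 2 with hg
    set ηm : Ω → ℝ := fun ω' => g ω' * η₁ ω' + (1 - g ω') * η₂ ω' with hηm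
    have hgmeas : Measurable[G] g := measurable_const
    have hgb : ∀ ω, 0 ≤ g ω ∧ g ω ≤ 1 := by intro ω; constructor <;> norm_num [hg]
    have hmLpp : Lpp G P ηm := by
      constructor
      · exact (hgmeas.mul h1.1).add ((measurable_const.sub hgmeas).mul h2.1)
      · filter_upwards [h1.2, h2.2] with ω hp1 hp2
        have : (0:ℝ) < (1/2) * η₁ ω + (1 - 1/2) * η₂ ω := by nlinarith
        simpa [hηm, hg] using this
    -- positive measure where η₁ ≠ η₂
    have hposset : 0 < P {ω | 0 < g ω ∧ g ω < 1 ∧ η₁ ω ≠ η₂ ω} := by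
      have : {ω | 0 < g ω ∧ g ω < 1 ∧ η₁ ω ≠ η₂ ω} = {ω | ¬ η₁ ω = η₂ ω} := by
        ext ω; simp [hg]; norm_num
      rw [this]
      rw [Filter.EventuallyEq, ae_iff] at hne
      exact (pos_iff_ne_zero).mpr hne
    have hstr := hstrict g η₁ η₂ hgmeas hgb h1 h2 hposset
    -- but a.s. the reverse inequality holds
    have hm1 := hs1.2.2 ηm hmLpp
    have hm2 := hs2.2.2 ηm hmLpp
    have hcontra : ∀ᵐ ω ∂P, ¬ (v ηm ω < g ω * v η₁ ω + (1 - g ω) * v η₂ ω) := by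
      filter_upwards [hm1, hm2] with ω hw1 hw2
      have hη : ηm ω = (1/2) * η₁ ω + (1 - 1/2) * η₂ ω := rfl
      rw [not_lt]
      simp only [hg]
      rw [hη] at hw1 hw2
      nlinarith [hw1, hw2]
    rw [ae_iff] at hcontra
    simp only [not_not] at hcontra
    rw [hcontra] at hstr
    exact lt_irrefl 0 hstr
  refine ⟨part1, ?_⟩
  intro ξ hξ η η' hη hη'
  have hηLpp : Lpp G P η := ⟨hη.1, hη.2.1⟩
  have hη'Lpp : Lpp G P η' := ⟨hη'.1, hη'.2.1⟩
  by_contra hne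
  exact part1 η η' hηLpp hη'Lpp hne (fun ω => -ξ ω)
    ((hlink ξ η hξ hηLpp).mp hη) ((hlink ξ η' hξ hη'Lpp).mp hη')
end

section
/- (Conditional minimax inequality, hard direction via integration) Let $\mathcal{G}$ be a sub-$\sigma$-algebra and $K : X \times Y \to L^1(\mathcal{G})$ a map such that for each $x \in X$ the family $\{K(x,y) : y \in Y\}$ is downwards directed, and for each $y \in Y$ the family $\{K(x,y) : x \in X\}$ is upwards directed. Then $E[\operatorname{esssup}_{x} \operatorname{essinf}_{y} K(x,y)] \geq \sup_x \inf_y E[K(x,y)]$ and $E[\operatorname{essinf}_{y} \operatorname{esssup}_{x} K(x,y)] \leq \inf_y \sup_x E[K(x,y)]$, provided the essential suprema/infima are integrable. -/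
open MeasureTheory Filter
open scoped ENNReal Topology
private lemma neg_ciSup' {X : Type*} [Nonempty X] (g : X → ℝ)
    (hb : BddAbove (Set.range g)) : (⨅ x, -g x) = -⨆ x, g x := by
  have hb' : BddBelow (Set.range fun x => -g x) := by
    obtain ⟨B, hB⟩ := hb
    exact ⟨-B, by rintro _ ⟨x, rfl⟩; exact neg_le_neg (hB ⟨x, rfl⟩)⟩
  apply le_antisymm
  · rw [le_neg]
    exact ciSup_le fun x => by
      have := ciInf_le hb' x; linarith
  · exact le_ciInf fun x => neg_le_neg (le_ciSup hb x)

private lemma aux_inf {Ω Y : Type*} [Nonempty Y] [F : MeasurableSpace Ω]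
    (G : MeasurableSpace Ω) (hG : G ≤ F) (P : Measure Ω) [IsProbabilityMeasure P]
    (f : Y → Ω → ℝ) (hfmeas : ∀ y, Measurable[G] (f y)) (hfint : ∀ y, Integrable (f y) P)
    (hdown : ∀ y₁ y₂, ∃ y, f y =ᵐ[P] fun ω => min (f y₁ ω) (f y₂ ω))
    (I : Ω → ℝ) (hImeas : Measurable[G] I) (hIint : Integrable I P)
    (hI_lb : ∀ y, ∀ᵐ ω ∂P, I ω ≤ f y ω)
    (hI_glb : ∀ w : Ω → ℝ, Measurable[G] w →
      (∀ y, ∀ᵐ ω ∂P, w ω ≤ f y ω) → ∀ᵐ ω ∂P, w ω ≤ I ω) :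
    (⨅ y, ∫ ω, f y ω ∂P) ≤ ∫ ω, I ω ∂P := by
  classical
  set g : Y → ℝ := fun y => ∫ ω, f y ω ∂P with hg
  have hlbg : ∀ y, ∫ ω, I ω ∂P ≤ g y := fun y =>
    integral_mono_ae hIint (hfint y) (hI_lb y)
  have hbdd : BddBelow (Set.range g) := ⟨∫ ω, I ω ∂P, by rintro _ ⟨y, rfl⟩; exact hlbg y⟩
  obtain ⟨u, hu_anti, hu_tendsto, hu_mem⟩ :=
    exists_seq_tendsto_sInf (Set.range_nonempty g) hbdd
  choose y hy using fun n => hu_mem n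
  -- recursive choice of minimizing sequence z
  let z : ℕ → Y := fun n => Nat.rec (y 0) (fun n zn => (hdown zn (y (n+1))).choose) n
  have hz : ∀ n, f (z (n+1)) =ᵐ[P] fun ω => min (f (z n) ω) (f (y (n+1)) ω) :=
    fun n => (hdown (z n) (y (n+1))).choose_spec
  -- decreasing G-measurable versions
  let h : ℕ → Ω → ℝ := fun n => Nat.rec (fun ω => max (I ω) (f (y 0) ω))
    (fun n hn => fun ω => min (hn ω) (max (I ω) (f (y (n+1)) ω))) n
  have hh0 : h 0 = fun ω => max (I ω) (f (y 0) ω) := rfl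
  have hhsucc : ∀ n, h (n+1) = fun ω => min (h n ω) (max (I ω) (f (y (n+1)) ω)) := fun n => rfl
  have hhmeas : ∀ n, Measurable[G] (h n) := by
    intro n; induction n with
    | zero => exact hImeas.max (hfmeas (y 0))
    | succ n ih => exact ih.min (hImeas.max (hfmeas (y (n+1))))
  have hhlb : ∀ n ω, I ω ≤ h n ω := by
    intro n; induction n with
    | zero => exact fun ω => le_max_left _ _
    | succ n ih => exact fun ω => le_min (ih ω) (le_max_left _ _)
  have hhanti : ∀ ω, Antitone fun n => h n ω := fun ω =>
    antitone_nat_of_succ_le fun n => min_le_left _ _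
  have hhae : ∀ n, h n =ᵐ[P] f (z n) := by
    intro n; induction n with
    | zero =>
        filter_upwards [hI_lb (y 0)] with ω h1
        exact max_eq_right h1
    | succ n ih =>
        filter_upwards [ih, hz n, hI_lb (y (n+1))] with ω h1 h2 h3
        show min (h n ω) (max (I ω) (f (y (n+1)) ω)) = f (z (n+1)) ω
        rw [max_eq_right h3, h1, h2]
  have hhint : ∀ n, Integrable (h n) P := fun n =>
    (hfint (z n)).congr (hhae n).symm
  -- limit L
  have hbb : ∀ ω, BddBelow (Set.range fun n => h n ω) := fun ω =>
    ⟨I ω, by rintro _ ⟨n, rfl⟩; exact hhlb n ω⟩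
  set L : Ω → ℝ := fun ω => ⨅ n, h n ω with hL
  have hLtendsto : ∀ ω, Tendsto (fun n => h n ω) atTop (𝓝 (L ω)) := fun ω =>
    tendsto_atTop_ciInf (hhanti ω) (hbb ω)
  have hLmeas : Measurable[G] L :=
    measurable_of_tendsto_metrizable (fun n => hhmeas n)
      (tendsto_pi_nhds.mpr hLtendsto)
  have hLle : ∀ n ω, L ω ≤ h n ω := fun n ω => ciInf_le (hbb ω) n
  have hIleL : ∀ ω, I ω ≤ L ω := fun ω => le_ciInf fun n => hhlb n ω
  -- dominating bound
  set bnd : Ω → ℝ := fun ω => |h 0 ω| + |I ω| with hbnd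
  have hbnd_int : Integrable bnd P := (hhint 0).abs.add hIint.abs
  have habs : ∀ n ω, ‖h n ω‖ ≤ bnd ω := by
    intro n ω
    rw [Real.norm_eq_abs, abs_le]
    constructor
    · have := hhlb n ω
      have := neg_abs_le (I ω); have := abs_nonneg (h 0 ω); simp only [hbnd]; linarith
    · have := hhanti ω (Nat.zero_le n)
      have := le_abs_self (h 0 ω); have := abs_nonneg (I ω); simp only [hbnd]; linarith
  have hLabs : ∀ ω, ‖L ω‖ ≤ bnd ω := by
    intro ω
    rw [Real.norm_eq_abs, abs_le]
    constructor
    · have := hIleL ω; have := neg_abs_le (I ω); have := abs_nonneg (h 0 ω)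
      simp only [hbnd]; linarith
    · have := hLle 0 ω; have := le_abs_self (h 0 ω); have := abs_nonneg (I ω)
      simp only [hbnd]; linarith
  have hLint : Integrable L P :=
    Integrable.mono' hbnd_int (hLmeas.aestronglyMeasurable : AEStronglyMeasurable L P)
      (Eventually.of_forall hLabs)
  -- ∫ h n → ∫ L
  have hint_tendsto : Tendsto (fun n => ∫ ω, h n ω ∂P) atTop (𝓝 (∫ ω, L ω ∂P)) := by
    apply tendsto_integral_of_dominated_convergence bnd
      (fun n => (hhmeas n).aestronglyMeasurable) hbnd_int
      (fun n => Eventually.of_forall fun ω => habs n ω)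
      (Eventually.of_forall hLtendsto)
  -- sandwich: sInf ≤ ∫ h n ≤ u n
  have hlow : ∀ n, sInf (Set.range g) ≤ ∫ ω, h n ω ∂P := by
    intro n
    rw [integral_congr_ae (hhae n)]
    exact csInf_le hbdd ⟨z n, rfl⟩
  have hhigh : ∀ n, ∫ ω, h n ω ∂P ≤ u n := by
    intro n
    rw [← hy n]
    cases n with
    | zero =>
        rw [integral_congr_ae (hhae 0)]
        exact le_rfl
    | succ n =>
        have h1 : h (n+1) ≤ᵐ[P] f (y (n+1)) := by
          filter_upwards [hI_lb (y (n+1))] with ω hω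
          calc h (n+1) ω ≤ max (I ω) (f (y (n+1)) ω) := min_le_right _ _
            _ = f (y (n+1)) ω := max_eq_right hω
        exact integral_mono_ae (hhint (n+1)) (hfint (y (n+1))) h1
  have hIL : Tendsto (fun n => ∫ ω, h n ω ∂P) atTop (𝓝 (sInf (Set.range g))) :=
    tendsto_of_tendsto_of_tendsto_of_le_of_le tendsto_const_nhds hu_tendsto hlow hhigh
  have hLeq : ∫ ω, L ω ∂P = sInf (Set.range g) := tendsto_nhds_unique hint_tendsto hIL
  -- L ≤ f y' a.e. for every y'
  have hLlef : ∀ y', ∀ᵐ ω ∂P, L ω ≤ f y' ω := by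
    intro y'
    set M : Ω → ℝ := fun ω => min (L ω) (max (I ω) (f y' ω)) with hM
    have hMleL : ∀ ω, M ω ≤ L ω := fun ω => min_le_left _ _
    have hIleM : ∀ ω, I ω ≤ M ω := fun ω => le_min (hIleL ω) (le_max_left _ _)
    have hMabs : ∀ ω, ‖M ω‖ ≤ bnd ω := by
      intro ω
      rw [Real.norm_eq_abs, abs_le]
      constructor
      · have := hIleM ω; have := neg_abs_le (I ω); have := abs_nonneg (h 0 ω)
        simp only [hbnd]; linarith
      · have h2 := (hMleL ω).trans (hLle 0 ω); have := le_abs_self (h 0 ω)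
        have := abs_nonneg (I ω); simp only [hbnd]; linarith
    have hMmeas : Measurable[G] M := hLmeas.min (hImeas.max (hfmeas y'))
    have hMint : Integrable M P :=
      Integrable.mono' hbnd_int (hMmeas.aestronglyMeasurable : AEStronglyMeasurable M P)
        (Eventually.of_forall hMabs)
    -- h' n := min (h n) (max I (f y'))  ≈ f (w n)
    have hw : ∀ n, ∃ w, f w =ᵐ[P] fun ω => min (f (z n) ω) (f y' ω) := fun n => hdown (z n) y'
    have hint_h' : ∀ n, sInf (Set.range g) ≤ ∫ ω, min (h n ω) (max (I ω) (f y' ω)) ∂P := by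
      intro n
      obtain ⟨w, hwspec⟩ := hw n
      have heq : (fun ω => min (h n ω) (max (I ω) (f y' ω))) =ᵐ[P] f w := by
        filter_upwards [hhae n, hwspec, hI_lb y'] with ω h1 h2 h3
        simp only [h1, max_eq_right h3, h2]
      rw [integral_congr_ae heq]
      exact csInf_le hbdd ⟨w, rfl⟩
    have htendsM : Tendsto (fun n => ∫ ω, min (h n ω) (max (I ω) (f y' ω)) ∂P)
        atTop (𝓝 (∫ ω, M ω ∂P)) := by
      apply tendsto_integral_of_dominated_convergence bnd
        (fun n => ((hhmeas n).min (hImeas.max (hfmeas y'))).aestronglyMeasurable)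
        hbnd_int
      · intro n
        apply Eventually.of_forall
        intro ω
        rw [Real.norm_eq_abs, abs_le]
        constructor
        · have h1 : I ω ≤ min (h n ω) (max (I ω) (f y' ω)) :=
            le_min (hhlb n ω) (le_max_left _ _)
          have := neg_abs_le (I ω); have := abs_nonneg (h 0 ω); simp only [hbnd]; linarith
        · have h1 : min (h n ω) (max (I ω) (f y' ω)) ≤ h 0 ω :=
            (min_le_left _ _).trans (hhanti ω (Nat.zero_le n))
          have := le_abs_self (h 0 ω); have := abs_nonneg (I ω); simp only [hbnd]; linarith
      · exact Eventually.of_forall fun ω => (hLtendsto ω).min tendsto_const_nhds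
    have hMge : sInf (Set.range g) ≤ ∫ ω, M ω ∂P := ge_of_tendsto htendsM
      (Eventually.of_forall hint_h')
    have hMint_le : ∫ ω, M ω ∂P ≤ ∫ ω, L ω ∂P :=
      integral_mono_ae hMint hLint (Eventually.of_forall hMleL)
    have hdiff : (fun ω => L ω - M ω) =ᵐ[P] 0 := by
      rw [← integral_eq_zero_iff_of_nonneg (fun ω => sub_nonneg.mpr (hMleL ω))
        (hLint.sub hMint)]
      rw [integral_sub hLint hMint]
      rw [hLeq]
      linarith
    filter_upwards [hdiff, hI_lb y'] with ω h1 h2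
    have : L ω = M ω := by
      have : L ω - M ω = 0 := h1
      linarith
    calc L ω = M ω := this
      _ ≤ max (I ω) (f y' ω) := min_le_right _ _
      _ = f y' ω := max_eq_right h2
  have hfin : ∀ᵐ ω ∂P, L ω ≤ I ω := hI_glb L hLmeas hLlef
  have : ∫ ω, L ω ∂P ≤ ∫ ω, I ω ∂P := integral_mono_ae hLint hIint hfin
  calc (⨅ y, ∫ ω, f y ω ∂P) = sInf (Set.range g) := by rw [sInf_range]
    _ = ∫ ω, L ω ∂P := hLeq.symm
    _ ≤ ∫ ω, I ω ∂P := this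
/-- Conditional minimax inequality (hard direction via integration): for a map
`K : X × Y → L¹(𝒢)` with `{K(x,·)}` downwards directed and `{K(·,y)}` upwards directed,
`E[esssup_x essinf_y K] ≥ sup_x inf_y E[K(x,y)]` and
`E[essinf_y esssup_x K] ≤ inf_y sup_x E[K(x,y)]`.  Here `I x` is the essential infimum over
`y` of `K x y`, `S` the essential supremum over `x` of `I x`, `T y` the essential supremum
over `x` of `K x y`, and `J` the essential infimum over `y` of `T y`, each expressed through
its characterizing properties, and all of them integrable. -/
theorem stmt8 {Ω X Y : Type*} [Nonempty X] [Nonempty Y]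
    [F : MeasurableSpace Ω] (G : MeasurableSpace Ω) (hG : G ≤ F)
    (P : Measure Ω) [IsProbabilityMeasure P]
    (K : X → Y → Ω → ℝ)
    (hKmeas : ∀ x y, Measurable[G] (K x y))
    (hKint : ∀ x y, Integrable (K x y) P)
    (hdown : ∀ (x : X) (y₁ y₂ : Y), ∃ y, K x y =ᵐ[P] fun ω => min (K x y₁ ω) (K x y₂ ω))
    (hup : ∀ (y : Y) (x₁ x₂ : X), ∃ x, K x y =ᵐ[P] fun ω => max (K x₁ y ω) (K x₂ y ω))
    (I : X → Ω → ℝ) (hImeas : ∀ x, Measurable[G] (I x)) (hIint : ∀ x, Integrable (I x) P)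
    (hI_lb : ∀ x y, ∀ᵐ ω ∂P, I x ω ≤ K x y ω)
    (hI_glb : ∀ x (w : Ω → ℝ), Measurable[G] w →
      (∀ y, ∀ᵐ ω ∂P, w ω ≤ K x y ω) → ∀ᵐ ω ∂P, w ω ≤ I x ω)
    (S : Ω → ℝ) (hSmeas : Measurable[G] S) (hSint : Integrable S P)
    (hS_ub : ∀ x, ∀ᵐ ω ∂P, I x ω ≤ S ω)
    (hS_lub : ∀ w : Ω → ℝ, Measurable[G] w →
      (∀ x, ∀ᵐ ω ∂P, I x ω ≤ w ω) → ∀ᵐ ω ∂P, S ω ≤ w ω)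
    (T : Y → Ω → ℝ) (hTmeas : ∀ y, Measurable[G] (T y)) (hTint : ∀ y, Integrable (T y) P)
    (hT_ub : ∀ y x, ∀ᵐ ω ∂P, K x y ω ≤ T y ω)
    (hT_lub : ∀ y (w : Ω → ℝ), Measurable[G] w →
      (∀ x, ∀ᵐ ω ∂P, K x y ω ≤ w ω) → ∀ᵐ ω ∂P, T y ω ≤ w ω)
    (J : Ω → ℝ) (hJmeas : Measurable[G] J) (hJint : Integrable J P)
    (hJ_lb : ∀ y, ∀ᵐ ω ∂P, J ω ≤ T y ω)
    (hJ_glb : ∀ w : Ω → ℝ, Measurable[G] w →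
      (∀ y, ∀ᵐ ω ∂P, w ω ≤ T y ω) → ∀ᵐ ω ∂P, w ω ≤ J ω) :
    ((⨆ x, ⨅ y, ∫ ω, K x y ω ∂P) ≤ ∫ ω, S ω ∂P) ∧
    ((∫ ω, J ω ∂P) ≤ ⨅ y, ⨆ x, ∫ ω, K x y ω ∂P) := by
  constructor
  · refine ciSup_le fun x => ?_
    have h1 := aux_inf (F := F) G hG P (K x) (hKmeas x) (hKint x) (hdown x) (I x) (hImeas x)
      (hIint x) (hI_lb x) (hI_glb x)
    exact h1.trans (integral_mono_ae (hIint x) hSint (hS_ub x))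
  · refine le_ciInf fun y => ?_
    have hJT : ∫ ω, J ω ∂P ≤ ∫ ω, T y ω ∂P :=
      integral_mono_ae hJint (hTint y) (hJ_lb y)
    have hdown' : ∀ x₁ x₂, ∃ x, (fun ω => -K x y ω) =ᵐ[P]
        fun ω => min (-K x₁ y ω) (-K x₂ y ω) := by
      intro x₁ x₂
      obtain ⟨x, hx⟩ := hup y x₁ x₂
      refine ⟨x, ?_⟩
      filter_upwards [hx] with ω h
      show -K x y ω = min (-K x₁ y ω) (-K x₂ y ω)
      rw [h, min_neg_neg]
    have hlb' : ∀ x, ∀ᵐ ω ∂P, -T y ω ≤ -K x y ω := fun x => by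
      filter_upwards [hT_ub y x] with ω h; linarith
    have hglb' : ∀ w : Ω → ℝ, Measurable[G] w →
        (∀ x, ∀ᵐ ω ∂P, w ω ≤ -K x y ω) → ∀ᵐ ω ∂P, w ω ≤ -T y ω := by
      intro w hw hwx
      have := hT_lub y (fun ω => -w ω) hw.neg (fun x => by
        filter_upwards [hwx x] with ω h; linarith)
      filter_upwards [this] with ω h; linarith
    have h2 := aux_inf (F := F) G hG P (fun x ω => -K x y ω) (fun x => (hKmeas x y).neg)
      (fun x => (hKint x y).neg) hdown' (fun ω => -T y ω) (hTmeas y).neg (hTint y).neg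
      hlb' hglb'
    have hb : BddAbove (Set.range fun x => ∫ ω, K x y ω ∂P) := by
      refine ⟨∫ ω, T y ω ∂P, ?_⟩
      rintro _ ⟨x, rfl⟩
      exact integral_mono_ae (hKint x y) (hTint y) (hT_ub y x)
    have h3 : (⨅ x, ∫ ω, -K x y ω ∂P) = -⨆ x, ∫ ω, K x y ω ∂P := by
      rw [← neg_ciSup' _ hb]
      exact iInf_congr fun x => integral_neg _
    rw [h3, integral_neg] at h2
    have : ∫ ω, T y ω ∂P ≤ ⨆ x, ∫ ω, K x y ω ∂P := by linarith
    exact hJT.trans this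
end

section
/- (Conditional minimax theorem) Let $\mathcal{G}$ be a sub-$\sigma$-algebra, and let $K : X \times Y \to L^1(\mathcal{G})$ satisfy: (i) for each $x$, $\{K(x,y): y \in Y\}$ is downwards directed; (ii) for each $y$, $\{K(x,y): x \in X\}$ is upwards directed; (iii) the unconditional minimax equality $\sup_x \inf_y E[K(x,y)] = \inf_y \sup_x E[K(x,y)]$ holds, and this remains true when restricted to any set $A \in \mathcal{G}$ of positive measure (i.e., with $K$ replaced by $1_A K$); (iv) all relevant essential extrema are integrable. Then $\operatorname{esssup}_x \operatorname{essinf}_y K(x,y) = \operatorname{essinf}_y \operatorname{esssup}_x K(x,y)$ almost surely. -/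
open MeasureTheory Filter
open scoped Topology

/-!
For an upwards directed family `f`, an increasing sequence `f (z n)` whose integrals approach
`⨆ i, ∫ f i` has a limit `w` with maximal integral; comparing `w` with `max w (f i)` shows that
`w` dominates every `f i`, so `w` is the essential supremum. Monotone convergence then gives
`∫_A esssup_x K ≤ ⨆ x, ∫_A K` on every set `A`, and dually `⨅ y, ∫_A K ≤ ∫_A essinf_y K`.
With the minimax equality on `A` this yields `∫_A J ≤ ∫_A S` for every `𝒢`-set `A`, hence
`J ≤ S` a.e.; the inequality `S ≤ J` holds for any family.
-/

def runningFold {ι : Type*} (g : ι → ι → ι) (x : ℕ → ι) : ℕ → ι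
  | 0 => x 0
  | n + 1 => g (runningFold g x n) (x (n + 1))

section DirectedFamily

variable {Ω ι : Type*} [MeasurableSpace Ω] {μ : Measure Ω} {f : ι → Ω → ℝ}

lemma exists_ae_monotone_tendsto_iSup_integral [Nonempty ι]
    (hint : ∀ i, Integrable (f i) μ)
    (hdir : ∀ i j, ∃ k, f k =ᵐ[μ] fun ω => max (f i ω) (f j ω))
    (hbdd : BddAbove (Set.range fun i => ∫ ω, f i ω ∂μ)) :
    ∃ z : ℕ → ι, (∀ᵐ ω ∂μ, Monotone fun n => f (z n) ω) ∧
      Tendsto (fun n => ∫ ω, f (z n) ω ∂μ) atTop (𝓝 (⨆ i, ∫ ω, f i ω ∂μ)) := by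
  obtain ⟨u, -, hu, hu_mem⟩ := exists_seq_tendsto_sSup (Set.range_nonempty _) hbdd
  choose x hx using hu_mem
  choose g hg using hdir
  set z := runningFold g x
  refine ⟨z, ?_, ?_⟩
  · filter_upwards [ae_all_iff.2 fun n => hg (z n) (x (n + 1))] with ω hω
    refine monotone_nat_of_le_succ fun n => ?_
    rw [show z (n + 1) = g (z n) (x (n + 1)) from rfl, hω n]
    exact le_max_left _ _
  · have hu_le : ∀ n, u n ≤ ∫ ω, f (z n) ω ∂μ := by
      rintro (_ | n)
      · exact (hx 0).ge
      · rw [← hx]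
        refine integral_mono_ae (hint _) (hint _) ?_
        filter_upwards [hg (z n) (x (n + 1))] with ω hω
        exact hω ▸ le_max_right _ _
    exact tendsto_of_tendsto_of_tendsto_of_le_of_le hu tendsto_const_nhds hu_le
      fun n => le_ciSup hbdd (z n)

lemma ae_le_of_ae_tendsto_of_integral_eq_iSup {z : ℕ → ι} {w : Ω → ℝ}
    (hint : ∀ i, Integrable (f i) μ)
    (hdir : ∀ i j, ∃ k, f k =ᵐ[μ] fun ω => max (f i ω) (f j ω))
    (hbdd : BddAbove (Set.range fun i => ∫ ω, f i ω ∂μ)) (hwint : Integrable w μ)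
    (hmono : ∀ᵐ ω ∂μ, Monotone fun n => f (z n) ω)
    (hlim : ∀ᵐ ω ∂μ, Tendsto (fun n => f (z n) ω) atTop (𝓝 (w ω)))
    (hw : ∫ ω, w ω ∂μ = ⨆ i, ∫ ω, f i ω ∂μ) (i : ι) :
    ∀ᵐ ω ∂μ, f i ω ≤ w ω := by
  choose g hg using hdir
  have hmax_int : Integrable (fun ω => max (w ω) (f i ω)) μ := hwint.sup (hint i)
  have hmax_le : ∫ ω, max (w ω) (f i ω) ∂μ ≤ ∫ ω, w ω ∂μ := by
    refine le_of_tendsto' (integral_tendsto_of_tendsto_of_monotone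
      (f := fun n ω => max (f (z n) ω) (f i ω)) (fun n => (hint _).sup (hint i)) hmax_int
      (hmono.mono fun ω h _ _ hnm => max_le_max (h hnm) le_rfl)
      (hlim.mono fun ω h => h.max tendsto_const_nhds)) fun n => ?_
    rw [hw, ← integral_congr_ae (hg (z n) i)]
    exact le_ciSup hbdd _
  have hmax_eq : w =ᵐ[μ] fun ω => max (w ω) (f i ω) :=
    (integral_eq_iff_of_ae_le hwint hmax_int (ae_of_all _ fun ω => le_max_left _ _)).1
      (le_antisymm (integral_mono hwint hmax_int fun ω => le_max_left _ _) hmax_le)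
  filter_upwards [hmax_eq] with ω hω
  exact hω ▸ le_max_right _ _

variable [Nonempty ι] {T : Ω → ℝ}

lemma exists_ae_monotone_tendsto_of_isEssSup
    (hmeas : ∀ i, Measurable (f i)) (hint : ∀ i, Integrable (f i) μ)
    (hdir : ∀ i j, ∃ k, f k =ᵐ[μ] fun ω => max (f i ω) (f j ω))
    (hTint : Integrable T μ) (hub : ∀ i, ∀ᵐ ω ∂μ, f i ω ≤ T ω)
    (hlub : ∀ w : Ω → ℝ, Measurable w → (∀ i, ∀ᵐ ω ∂μ, f i ω ≤ w ω) → ∀ᵐ ω ∂μ, T ω ≤ w ω) :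
    ∃ z : ℕ → ι, ∀ᵐ ω ∂μ,
      Monotone (fun n => f (z n) ω) ∧ Tendsto (fun n => f (z n) ω) atTop (𝓝 (T ω)) := by
  have hbdd : BddAbove (Set.range fun i => ∫ ω, f i ω ∂μ) := by
    refine ⟨∫ ω, T ω ∂μ, ?_⟩
    rintro _ ⟨i, rfl⟩
    exact integral_mono_ae (hint i) hTint (hub i)
  obtain ⟨z, hmono, hz⟩ := exists_ae_monotone_tendsto_iSup_integral hint hdir hbdd
  set w : Ω → ℝ := fun ω => ⨆ n, f (z n) ω
  have hwmeas : Measurable w := Measurable.iSup fun n => hmeas (z n)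
  have hw : ∀ᵐ ω ∂μ, Tendsto (fun n => f (z n) ω) atTop (𝓝 (w ω)) ∧ w ω ≤ T ω := by
    filter_upwards [hmono, ae_all_iff.2 fun n => hub (z n)] with ω hω hT
    exact ⟨tendsto_atTop_ciSup hω ⟨T ω, by rintro _ ⟨n, rfl⟩; exact hT n⟩, ciSup_le hT⟩
  have hlim : ∀ᵐ ω ∂μ, Tendsto (fun n => f (z n) ω) atTop (𝓝 (w ω)) := hw.mono fun _ h => h.1
  have hwint : Integrable w μ := by
    refine integrable_of_le_of_le hwmeas.aestronglyMeasurable ?_ (hw.mono fun _ h => h.2)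
      (hint (z 0)) hTint
    filter_upwards [hmono, hlim] with ω hω hωlim
    exact hω.ge_of_tendsto hωlim 0
  have hwM : ∫ ω, w ω ∂μ = ⨆ i, ∫ ω, f i ω ∂μ :=
    tendsto_nhds_unique (integral_tendsto_of_tendsto_of_monotone (fun n => hint _) hwint hmono hlim)
      hz
  have hTw := hlub w hwmeas
    (ae_le_of_ae_tendsto_of_integral_eq_iSup hint hdir hbdd hwint hmono hlim hwM)
  refine ⟨z, ?_⟩
  filter_upwards [hmono, hw, hTw] with ω hω hωw hTω
  exact ⟨hω, le_antisymm hωw.2 hTω ▸ hωw.1⟩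

lemma setIntegral_le_iSup_setIntegral_of_isEssSup
    (hmeas : ∀ i, Measurable (f i)) (hint : ∀ i, Integrable (f i) μ)
    (hdir : ∀ i j, ∃ k, f k =ᵐ[μ] fun ω => max (f i ω) (f j ω))
    (hTint : Integrable T μ) (hub : ∀ i, ∀ᵐ ω ∂μ, f i ω ≤ T ω)
    (hlub : ∀ w : Ω → ℝ, Measurable w → (∀ i, ∀ᵐ ω ∂μ, f i ω ≤ w ω) → ∀ᵐ ω ∂μ, T ω ≤ w ω)
    (A : Set Ω) :
    ∫ ω in A, T ω ∂μ ≤ ⨆ i, ∫ ω in A, f i ω ∂μ := by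
  obtain ⟨z, hz⟩ := exists_ae_monotone_tendsto_of_isEssSup hmeas hint hdir hTint hub hlub
  have hbdd : BddAbove (Set.range fun i => ∫ ω in A, f i ω ∂μ) := by
    refine ⟨∫ ω in A, T ω ∂μ, ?_⟩
    rintro _ ⟨i, rfl⟩
    exact setIntegral_mono_ae (hint i).integrableOn hTint.integrableOn (hub i)
  exact le_of_tendsto' (integral_tendsto_of_tendsto_of_monotone (fun n => (hint _).restrict)
    hTint.restrict (ae_restrict_of_ae (hz.mono fun _ h => h.1))
    (ae_restrict_of_ae (hz.mono fun _ h => h.2))) fun n => le_ciSup hbdd (z n)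

lemma iInf_setIntegral_le_setIntegral_of_isEssInf
    (hmeas : ∀ i, Measurable (f i)) (hint : ∀ i, Integrable (f i) μ)
    (hdir : ∀ i j, ∃ k, f k =ᵐ[μ] fun ω => min (f i ω) (f j ω))
    (hTint : Integrable T μ) (hlb : ∀ i, ∀ᵐ ω ∂μ, T ω ≤ f i ω)
    (hglb : ∀ w : Ω → ℝ, Measurable w → (∀ i, ∀ᵐ ω ∂μ, w ω ≤ f i ω) → ∀ᵐ ω ∂μ, w ω ≤ T ω)
    (A : Set Ω) :
    ⨅ i, ∫ ω in A, f i ω ∂μ ≤ ∫ ω in A, T ω ∂μ := by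
  have hneg := setIntegral_le_iSup_setIntegral_of_isEssSup (f := fun i ω => -f i ω)
    (T := fun ω => -T ω) (fun i => (hmeas i).neg) (fun i => (hint i).neg)
    (fun i j => (hdir i j).imp fun k hk => hk.mono fun ω h => by simp [h, max_neg_neg])
    hTint.neg (fun i => (hlb i).mono fun _ h => neg_le_neg h)
    (fun w hw hle => (hglb (fun ω => -w ω) hw.neg fun i => (hle i).mono fun _ h => neg_le.1 h).mono
      fun _ h => neg_le.1 h) A
  simp only [integral_neg] at hneg
  have hbdd : BddBelow (Set.range fun i => ∫ ω in A, f i ω ∂μ) := by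
    refine ⟨∫ ω in A, T ω ∂μ, ?_⟩
    rintro _ ⟨i, rfl⟩
    exact setIntegral_mono_ae hTint.integrableOn (hint i).integrableOn (hlb i)
  have : ⨆ i, -∫ ω in A, f i ω ∂μ ≤ -⨅ i, ∫ ω in A, f i ω ∂μ :=
    ciSup_le fun i => neg_le_neg (ciInf_le hbdd i)
  linarith

end DirectedFamily

theorem stmt9_general {Ω X Y : Type*} [Nonempty X] [Nonempty Y]
    (G : MeasurableSpace Ω)
    (P : Measure Ω)
    (K : X → Y → Ω → ℝ)
    (hKmeas : ∀ x y, Measurable[G] (K x y))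
    (hKint : ∀ x y, Integrable (K x y) P)
    (hdown : ∀ (x : X) (y₁ y₂ : Y), ∃ y, K x y =ᵐ[P] fun ω => min (K x y₁ ω) (K x y₂ ω))
    (hup : ∀ (y : Y) (x₁ x₂ : X), ∃ x, K x y =ᵐ[P] fun ω => max (K x₁ y ω) (K x₂ y ω))
    (I : X → Ω → ℝ) (hIint : ∀ x, Integrable (I x) P)
    (hI_lb : ∀ x y, ∀ᵐ ω ∂P, I x ω ≤ K x y ω)
    (hI_glb : ∀ x (w : Ω → ℝ), Measurable[G] w →
      (∀ y, ∀ᵐ ω ∂P, w ω ≤ K x y ω) → ∀ᵐ ω ∂P, w ω ≤ I x ω)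
    (S : Ω → ℝ) (hSmeas : Measurable[G] S) (hSint : Integrable S P)
    (hS_ub : ∀ x, ∀ᵐ ω ∂P, I x ω ≤ S ω)
    (hS_lub : ∀ w : Ω → ℝ, Measurable[G] w →
      (∀ x, ∀ᵐ ω ∂P, I x ω ≤ w ω) → ∀ᵐ ω ∂P, S ω ≤ w ω)
    (T : Y → Ω → ℝ) (hTmeas : ∀ y, Measurable[G] (T y)) (hTint : ∀ y, Integrable (T y) P)
    (hT_ub : ∀ y x, ∀ᵐ ω ∂P, K x y ω ≤ T y ω)
    (hT_lub : ∀ y (w : Ω → ℝ), Measurable[G] w →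
      (∀ x, ∀ᵐ ω ∂P, K x y ω ≤ w ω) → ∀ᵐ ω ∂P, T y ω ≤ w ω)
    (J : Ω → ℝ) (hJint : Integrable J P)
    (hJ_lb : ∀ y, ∀ᵐ ω ∂P, J ω ≤ T y ω)
    (hJ_glb : ∀ w : Ω → ℝ, Measurable[G] w →
      (∀ y, ∀ᵐ ω ∂P, w ω ≤ T y ω) → ∀ᵐ ω ∂P, w ω ≤ J ω)
    -- the unconditional minimax equality holds on every positive-measure 𝒢-set
    (hminimax : ∀ A : Set Ω, MeasurableSet[G] A → 0 < P A →
      (⨆ x, ⨅ y, ∫ ω in A, K x y ω ∂P) = ⨅ y, ⨆ x, ∫ ω in A, K x y ω ∂P) :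
    S =ᵐ[P] J := by
  have hSJ : S ≤ᵐ[P] J := hJ_glb S hSmeas fun y =>
    hS_lub (T y) (hTmeas y) fun x => EventuallyLE.trans (hI_lb x y) (hT_ub y x)
  have hJS : J ≤ᵐ[P] S := by
    refine ae_le_of_forall_setIntegral_le hJint hSint fun A hA _ => ?_
    rcases eq_or_ne (P A) 0 with hA0 | hA0
    · simp [Measure.restrict_eq_zero.2 hA0]
    calc ∫ ω in A, J ω ∂P
        ≤ ⨅ y, ⨆ x, ∫ ω in A, K x y ω ∂P := le_ciInf fun y =>
          (setIntegral_mono_ae hJint.integrableOn (hTint y).integrableOn (hJ_lb y)).trans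
            (setIntegral_le_iSup_setIntegral_of_isEssSup (fun x => hKmeas x y)
              (fun x => hKint x y) (hup y) (hTint y) (hT_ub y) (hT_lub y) A)
      _ = ⨆ x, ⨅ y, ∫ ω in A, K x y ω ∂P := (hminimax A hA (pos_iff_ne_zero.2 hA0)).symm
      _ ≤ ∫ ω in A, S ω ∂P := ciSup_le fun x =>
          (iInf_setIntegral_le_setIntegral_of_isEssInf (hKmeas x) (hKint x) (hdown x) (hIint x)
            (hI_lb x) (hI_glb x) A).trans
            (setIntegral_mono_ae (hIint x).integrableOn hSint.integrableOn (hS_ub x))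
  exact hSJ.antisymm hJS

/-- Conditional minimax inequality (hard direction via integration): for a map
`K : X × Y → L¹(𝒢)` with `{K(x,·)}` downwards directed and `{K(·,y)}` upwards directed,
if moreover the unconditional minimax
equality holds on every positive-measure `𝒢`-set, then
`esssup_x essinf_y K = essinf_y esssup_x K` a.s.  Here `I x` is the essential infimum over
`y` of `K x y`, `S` the essential supremum over `x` of `I x`, `T y` the essential supremum
over `x` of `K x y`, and `J` the essential infimum over `y` of `T y`, each expressed through
its characterizing properties, and all of them integrable. -/
theorem stmt9 {Ω X Y : Type*} [Nonempty X] [Nonempty Y]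
    [F : MeasurableSpace Ω] (G : MeasurableSpace Ω) (hG : G ≤ F)
    (P : Measure Ω) [IsProbabilityMeasure P]
    (K : X → Y → Ω → ℝ)
    (hKmeas : ∀ x y, Measurable[G] (K x y))
    (hKint : ∀ x y, Integrable (K x y) P)
    (hdown : ∀ (x : X) (y₁ y₂ : Y), ∃ y, K x y =ᵐ[P] fun ω => min (K x y₁ ω) (K x y₂ ω))
    (hup : ∀ (y : Y) (x₁ x₂ : X), ∃ x, K x y =ᵐ[P] fun ω => max (K x₁ y ω) (K x₂ y ω))
    (I : X → Ω → ℝ) (hImeas : ∀ x, Measurable[G] (I x)) (hIint : ∀ x, Integrable (I x) P)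
    (hI_lb : ∀ x y, ∀ᵐ ω ∂P, I x ω ≤ K x y ω)
    (hI_glb : ∀ x (w : Ω → ℝ), Measurable[G] w →
      (∀ y, ∀ᵐ ω ∂P, w ω ≤ K x y ω) → ∀ᵐ ω ∂P, w ω ≤ I x ω)
    (S : Ω → ℝ) (hSmeas : Measurable[G] S) (hSint : Integrable S P)
    (hS_ub : ∀ x, ∀ᵐ ω ∂P, I x ω ≤ S ω)
    (hS_lub : ∀ w : Ω → ℝ, Measurable[G] w →
      (∀ x, ∀ᵐ ω ∂P, I x ω ≤ w ω) → ∀ᵐ ω ∂P, S ω ≤ w ω)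
    (T : Y → Ω → ℝ) (hTmeas : ∀ y, Measurable[G] (T y)) (hTint : ∀ y, Integrable (T y) P)
    (hT_ub : ∀ y x, ∀ᵐ ω ∂P, K x y ω ≤ T y ω)
    (hT_lub : ∀ y (w : Ω → ℝ), Measurable[G] w →
      (∀ x, ∀ᵐ ω ∂P, K x y ω ≤ w ω) → ∀ᵐ ω ∂P, T y ω ≤ w ω)
    (J : Ω → ℝ) (hJmeas : Measurable[G] J) (hJint : Integrable J P)
    (hJ_lb : ∀ y, ∀ᵐ ω ∂P, J ω ≤ T y ω)
    (hJ_glb : ∀ w : Ω → ℝ, Measurable[G] w →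
      (∀ y, ∀ᵐ ω ∂P, w ω ≤ T y ω) → ∀ᵐ ω ∂P, w ω ≤ J ω)
    -- the unconditional minimax equality holds on every positive-measure 𝒢-set
    (hminimax : ∀ A : Set Ω, MeasurableSet[G] A → 0 < P A →
      (⨆ x, ⨅ y, ∫ ω in A, K x y ω ∂P) = ⨅ y, ⨆ x, ∫ ω in A, K x y ω ∂P) :
    S =ᵐ[P] J :=
  stmt9_general G P K hKmeas hKint hdown hup I hIint hI_lb hI_glb S hSmeas hSint hS_ub hS_lub T
    hTmeas hTint hT_ub hT_lub J hJint hJ_lb hJ_glb hminimax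
end

section
/- Let $K \subseteq L^0_{++}(\mathcal{G})$ be a $\mathcal{G}$-convexly compact set of strictly positive $\mathcal{G}$-measurable random variables. Then for any $\alpha > 0$, the essential supremum $X^* = \operatorname{esssup}_{X \in K} X^{-\alpha}$ is almost surely finite. Equivalently, $\operatorname{essinf}_{X \in K} X > 0$ a.s. -/
open MeasureTheory Filter Set
open scoped ENNReal Topology

/-- `h` is a finite `G`-convex combination of the tail `k n, k (n+1), …` of the sequence `k`. -/
def GTailConvexComb {Ω : Type*} (G : MeasurableSpace Ω) (k : ℕ → Ω → ℝ) (n : ℕ)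
    (h : Ω → ℝ) : Prop :=
  ∃ (m : ℕ) (w : ℕ → Ω → ℝ), (∀ i, Measurable[G] (w i)) ∧ (∀ i ω, 0 ≤ w i ω) ∧
    (∀ ω, ∑ i ∈ Finset.range m, w i ω = 1) ∧
    ∀ ω, h ω = ∑ i ∈ Finset.range m, w i ω * k (n + i) ω

/-- `K` is `G`-convexly compact: it is `G`-convex, closed in probability, and every sequence
in `K` admits forward `G`-convex combinations converging almost surely to an element of `K`. -/
def GConvexlyCompact {Ω : Type*} [MeasurableSpace Ω] (G : MeasurableSpace Ω) (P : Measure Ω)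
    (K : Set (Ω → ℝ)) : Prop :=
  (∀ x ∈ K, ∀ y ∈ K, ∀ g : Ω → ℝ, Measurable[G] g → (∀ ω, 0 ≤ g ω ∧ g ω ≤ 1) →
    (fun ω => g ω * x ω + (1 - g ω) * y ω) ∈ K) ∧
  (∀ (f : ℕ → Ω → ℝ) (g : Ω → ℝ), (∀ n, f n ∈ K) → TendstoInMeasure P f atTop g → g ∈ K) ∧
  (∀ k : ℕ → Ω → ℝ, (∀ n, k n ∈ K) →
    ∃ (h : ℕ → Ω → ℝ) (hl : Ω → ℝ), (∀ n, GTailConvexComb G k n (h n)) ∧ hl ∈ K ∧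
      ∀ᵐ ω ∂P, Tendsto (fun n => h n ω) atTop (𝓝 (hl ω)))


private lemma arctan_integrable_aux {Ω : Type*} (mΩ : MeasurableSpace Ω) (P : Measure Ω)
    [IsProbabilityMeasure P] {X : Ω → ℝ} (hm : Measurable X) :
    Integrable (fun ω => Real.arctan (X ω)) P := by
  have hma : Measurable fun ω => Real.arctan (X ω) := Real.measurable_arctan.comp hm
  refine (integrable_const (2 : ℝ)).mono' hma.aestronglyMeasurable ?_
  filter_upwards with ω
  rw [Real.norm_eq_abs, abs_le]
  have h1 := Real.neg_pi_div_two_lt_arctan (X ω)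
  have h2 := Real.arctan_lt_pi_div_two (X ω)
  have h3 := Real.pi_le_four
  constructor <;> linarith

/-- For a `𝒢`-convexly compact `K ⊆ L⁰₊₊(𝒢)` and any `α > 0`, the essential supremum
`esssup_{X ∈ K} X^{-α}` is a.s. finite (it is dominated by a finite random variable);
equivalently `essinf_{X ∈ K} X > 0` a.s. -/
theorem stmt10 {Ω : Type*} [F : MeasurableSpace Ω] (G : MeasurableSpace Ω) (hG : G ≤ F)
    (P : Measure Ω) [IsProbabilityMeasure P]
    (K : Set (Ω → ℝ)) (hK : ∀ f ∈ K, Lpp G P f) (hcc : GConvexlyCompact G P K)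
    (α : ℝ) (hα : 0 < α) :
    (∃ Xstar : Ω → ℝ, ∀ X ∈ K, ∀ᵐ ω ∂P, X ω ^ (-α) ≤ Xstar ω) ∧
    (∃ c : Ω → ℝ, (∀ᵐ ω ∂P, 0 < c ω) ∧ ∀ X ∈ K, ∀ᵐ ω ∂P, c ω ≤ X ω) := by
  classical
  by_cases hne : K.Nonempty
  swap
  · rw [Set.not_nonempty_iff_eq_empty] at hne
    exact ⟨⟨fun _ => 0, fun X hX => absurd hX (by simp [hne])⟩,
      ⟨fun _ => 1, ae_of_all _ fun ω => one_pos, fun X hX => absurd hX (by simp [hne])⟩⟩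
  obtain ⟨x0, hx0⟩ := hne
  -- integrability of arctan ∘ X for X ∈ K
  have hInt : ∀ X : Ω → ℝ, X ∈ K → Integrable (fun ω => Real.arctan (X ω)) P := by
    intro X hX
    exact arctan_integrable_aux G P (hK X hX).1
  -- K is closed under pointwise min
  have hmin : ∀ x, x ∈ K → ∀ y, y ∈ K → (fun ω => min (x ω) (y ω)) ∈ K := by
    intro x hx y hy
    set g : Ω → ℝ := fun ω => if x ω ≤ y ω then 1 else 0 with hgdef
    have hgm : Measurable[G] g := by
      have hs : MeasurableSet[G] {ω | x ω ≤ y ω} :=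
        measurableSet_le (hK x hx).1 (hK y hy).1
      exact Measurable.ite hs measurable_const measurable_const
    have hmem := hcc.1 x hx y hy g hgm
      (fun ω => by by_cases h : x ω ≤ y ω <;> simp [hgdef, h])
    have heq : (fun ω => g ω * x ω + (1 - g ω) * y ω) = fun ω => min (x ω) (y ω) := by
      funext ω
      by_cases h : x ω ≤ y ω
      · simp [hgdef, h, min_eq_left h]
      · simp [hgdef, h, min_eq_right (le_of_not_ge h)]
    rwa [heq] at hmem
  -- the infimum of integrals of arctan over K
  set I : Set ℝ := (fun X : Ω → ℝ => ∫ ω, Real.arctan (X ω) ∂P) '' K with hIdef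
  have hIne : I.Nonempty := ⟨_, ⟨x0, hx0, rfl⟩⟩
  have hIbdd : BddBelow I := by
    refine ⟨-2, fun r hr => ?_⟩
    obtain ⟨X, hX, rfl⟩ := hr
    have h1 : ∫ ω, (-2 : ℝ) ∂P ≤ ∫ ω, Real.arctan (X ω) ∂P := by
      refine integral_mono (integrable_const _) (hInt X hX) fun ω => ?_
      have := Real.neg_pi_div_two_lt_arctan (X ω)
      have := Real.pi_le_four
      linarith
    simpa using h1
  -- a minimizing sequence
  have hchoice : ∀ n : ℕ, ∃ X ∈ K,
      ∫ ω, Real.arctan (X ω) ∂P < sInf I + 1 / (n + 1) := by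
    intro n
    obtain ⟨a, ⟨X, hX, rfl⟩, ha⟩ :=
      Real.lt_sInf_add_pos hIne (by positivity : (0:ℝ) < 1 / (n + 1))
    exact ⟨X, hX, ha⟩
  choose x hxK hxI using hchoice
  -- running minima
  let k : ℕ → Ω → ℝ := fun n => Nat.rec (motive := fun _ => Ω → ℝ) (x 0)
    (fun n kn => fun ω => min (kn ω) (x (n + 1) ω)) n
  have hkK : ∀ n, k n ∈ K := by
    intro n
    induction n with
    | zero => exact hxK 0
    | succ n ih => exact hmin (k n) ih (x (n + 1)) (hxK (n + 1))
  have hkanti : ∀ n m, n ≤ m → ∀ ω, k m ω ≤ k n ω := by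
    intro n m h
    induction h with
    | refl => exact fun ω => le_rfl
    | step h ih => exact fun ω => le_trans (min_le_left _ _) (ih ω)
  have hkx : ∀ n ω, k n ω ≤ x n ω := by
    intro n ω
    cases n with
    | zero => exact le_rfl
    | succ n => exact min_le_right _ _
  -- apply convex compactness
  obtain ⟨h, hl, hconv, hlK, haeconv⟩ := hcc.2.2 k hkK
  have hhk : ∀ n ω, h n ω ≤ k n ω := by
    intro n ω
    obtain ⟨m, w, hwm, hw0, hw1, hrep⟩ := hconv n
    rw [hrep ω]
    calc ∑ i ∈ Finset.range m, w i ω * k (n + i) ω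
        ≤ ∑ i ∈ Finset.range m, w i ω * k n ω :=
          Finset.sum_le_sum fun i _ =>
            mul_le_mul_of_nonneg_left (hkanti n (n + i) (Nat.le_add_right _ _) ω) (hw0 i ω)
      _ = k n ω := by rw [← Finset.sum_mul, hw1 ω, one_mul]
  have hlle : ∀ᵐ ω ∂P, ∀ n, hl ω ≤ k n ω := by
    filter_upwards [haeconv] with ω hω
    intro n
    refine le_of_tendsto hω ?_
    filter_upwards [eventually_ge_atTop n] with j hj
    exact le_trans (hhk j ω) (hkanti n j hj ω)
  have hlint := hInt hl hlK
  -- the integral of arctan ∘ hl attains the infimum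
  have hlm : ∫ ω, Real.arctan (hl ω) ∂P ≤ sInf I := by
    have key : ∀ n : ℕ, ∫ ω, Real.arctan (hl ω) ∂P ≤ sInf I + 1 / (n + 1) := by
      intro n
      have h1 : ∫ ω, Real.arctan (hl ω) ∂P ≤ ∫ ω, Real.arctan (x n ω) ∂P := by
        refine integral_mono_ae hlint (hInt (x n) (hxK n)) ?_
        filter_upwards [hlle] with ω hω
        exact Real.arctan_strictMono.monotone (le_trans (hω n) (hkx n ω))
      exact h1.trans (hxI n).le
    have htend : Tendsto (fun n : ℕ => sInf I + 1 / (n + 1)) atTop (𝓝 (sInf I)) := by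
      have h0 : Tendsto (fun n : ℕ => 1 / ((n : ℝ) + 1)) atTop (𝓝 0) :=
        tendsto_one_div_add_atTop_nhds_zero_nat
      have := (tendsto_const_nhds (x := sInf I) (f := (atTop : Filter ℕ))).add h0
      simpa using this
    exact ge_of_tendsto' htend key
  have hleq : ∫ ω, Real.arctan (hl ω) ∂P = sInf I :=
    le_antisymm hlm (csInf_le hIbdd ⟨hl, hlK, rfl⟩)
  -- hl is a.s. below every element of K
  have hlleX : ∀ X, X ∈ K → ∀ᵐ ω ∂P, hl ω ≤ X ω := by
    intro X hX
    have hY : (fun ω => min (X ω) (hl ω)) ∈ K := hmin X hX hl hlK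
    have hYint := hInt _ hY
    have h2 : ∀ ω, Real.arctan (min (X ω) (hl ω)) ≤ Real.arctan (hl ω) := fun ω =>
      Real.arctan_strictMono.monotone (min_le_right _ _)
    have hYeq : ∫ ω, Real.arctan (min (X ω) (hl ω)) ∂P = sInf I :=
      le_antisymm (by rw [← hleq]; exact integral_mono hYint hlint h2)
        (csInf_le hIbdd ⟨_, hY, rfl⟩)
    have h3 : ∫ ω, (Real.arctan (hl ω) - Real.arctan (min (X ω) (hl ω))) ∂P = 0 := by
      rw [integral_sub hlint hYint, hleq, hYeq, sub_self]
    have h4 := (integral_eq_zero_iff_of_nonneg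
      (fun ω => sub_nonneg.2 (h2 ω)) (hlint.sub hYint)).1 h3
    filter_upwards [h4] with ω hω
    have hω' : Real.arctan (min (X ω) (hl ω)) = Real.arctan (hl ω) := by
      have : Real.arctan (hl ω) - Real.arctan (min (X ω) (hl ω)) = 0 := hω
      linarith
    have := Real.arctan_injective hω'
    exact min_eq_right_iff.1 this
  have hlpos := (hK hl hlK).2
  refine ⟨⟨fun ω => hl ω ^ (-α), ?_⟩, ⟨hl, hlpos, hlleX⟩⟩
  intro X hX
  filter_upwards [hlpos, hlleX X hX] with ω h1 h2
  exact Real.rpow_le_rpow_of_nonpos h1 h2 (neg_nonpos.2 hα.le)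
end

section
/- Let $K \subseteq L^0_{++}(\mathcal{G})$ be $\mathcal{G}$-convexly compact. Then $k^* = \operatorname{esssup}_{k \in K} k$ is almost surely finite, i.e., $K$ is bounded above by a single finite random variable. -/
open MeasureTheory Filter Set
open scoped ENNReal Topology

section aux

variable {Ω : Type*} {F : MeasurableSpace Ω} {P : Measure Ω} [IsProbabilityMeasure P]

private lemma arctan_integrable {f : Ω → ℝ} (hf : Measurable[F] f) :
    Integrable (fun ω => Real.arctan (f ω)) P := by
  refine ⟨(Real.measurable_arctan.comp hf).aestronglyMeasurable, ?_⟩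
  refine HasFiniteIntegral.of_bounded (C := Real.pi / 2) ?_
  filter_upwards with ω
  rw [Real.norm_eq_abs, abs_le]
  exact ⟨(Real.neg_pi_div_two_lt_arctan _).le, (Real.arctan_lt_pi_div_two _).le⟩

/-- `K` is closed under pointwise max. -/
private lemma max_mem {G : MeasurableSpace Ω} {K : Set (Ω → ℝ)}
    (hconv : ∀ x ∈ K, ∀ y ∈ K, ∀ g : Ω → ℝ, Measurable[G] g → (∀ ω, 0 ≤ g ω ∧ g ω ≤ 1) →
      (fun ω => g ω * x ω + (1 - g ω) * y ω) ∈ K)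
    {x y : Ω → ℝ} (hx : x ∈ K) (hy : y ∈ K)
    (hxm : Measurable[G] x) (hym : Measurable[G] y) :
    (fun ω => max (x ω) (y ω)) ∈ K := by
  set g : Ω → ℝ := fun ω => if y ω ≤ x ω then 1 else 0 with hg
  have hgm : Measurable[G] g :=
    Measurable.ite (measurableSet_le hym hxm) measurable_const measurable_const
  have h01 : ∀ ω, 0 ≤ g ω ∧ g ω ≤ 1 := by
    intro ω; by_cases h : y ω ≤ x ω <;> simp [hg, h]
  have := hconv x hx y hy g hgm h01
  have heq : (fun ω => g ω * x ω + (1 - g ω) * y ω) = fun ω => max (x ω) (y ω) := by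
    funext ω
    by_cases h : y ω ≤ x ω
    · simp [hg, h, max_eq_left h]
    · simp [hg, h, max_eq_right (not_le.1 h).le]
  rwa [heq] at this

end aux

/-- A `𝒢`-convexly compact `K ⊆ L⁰₊₊(𝒢)` is bounded above by a single a.s.-finite random
variable: `esssup_{k ∈ K} k` is a.s. finite. -/
theorem stmt11 {Ω : Type*} [F : MeasurableSpace Ω] (G : MeasurableSpace Ω) (hG : G ≤ F)
    (P : Measure Ω) [IsProbabilityMeasure P]
    (K : Set (Ω → ℝ)) (hK : ∀ f ∈ K, Lpp G P f) (hcc : GConvexlyCompact G P K) :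
    ∃ B : Ω → ℝ, ∀ k ∈ K, ∀ᵐ ω ∂P, k ω ≤ B ω := by
  rcases Set.eq_empty_or_nonempty K with hKe | ⟨k₀, hk₀⟩
  · exact ⟨0, fun k hk => absurd hk (by simp [hKe])⟩
  obtain ⟨hconv, -, hforward⟩ := hcc
  have hmeasG : ∀ f ∈ K, Measurable[G] f := fun f hf => (hK f hf).1
  -- the family of arctan-integrals
  set I : (Ω → ℝ) → ℝ := fun f => ∫ ω, Real.arctan (f ω) ∂P with hI
  set S : Set ℝ := I '' K with hS
  have hSne : S.Nonempty := ⟨I k₀, k₀, hk₀, rfl⟩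
  have hSbdd : BddAbove S := by
    refine ⟨Real.pi / 2, ?_⟩
    rintro - ⟨f, hf, rfl⟩
    calc I f ≤ ∫ _, Real.pi / 2 ∂P := by
          refine integral_mono (μ := P) (arctan_integrable (hmeasG f hf)) (integrable_const _) ?_
          exact fun ω => (Real.arctan_lt_pi_div_two _).le
      _ = Real.pi / 2 := by simp
  set s : ℝ := sSup S with hs
  -- choose a sequence approaching the sup
  have hseq : ∀ n : ℕ, ∃ f ∈ K, s - 1 / (n + 1) < I f := by
    intro n
    have hlt : s - 1 / (n + 1) < s := by
      have : (0:ℝ) < 1 / (n + 1) := by positivity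
      linarith
    obtain ⟨-, ⟨f, hf, rfl⟩, hfs⟩ := exists_lt_of_lt_csSup hSne hlt
    exact ⟨f, hf, hfs⟩
  choose ks hksK hksI using hseq
  -- increasing maxima
  set m : ℕ → Ω → ℝ := fun n => Nat.rec (ks 0)
    (fun n mn => fun ω => max (mn ω) (ks (n + 1) ω)) n with hm
  have hmK : ∀ n, m n ∈ K := by
    intro n
    induction n with
    | zero => exact hksK 0
    | succ n ih =>
      exact max_mem hconv ih (hksK (n + 1)) (hmeasG _ ih) (hmeasG _ (hksK (n + 1)))
  have hmmono : ∀ n ω, m n ω ≤ m (n + 1) ω := fun n ω => le_max_left _ _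
  have hmmono' : ∀ n j ω, n ≤ j → m n ω ≤ m j ω := by
    intro n j ω hnj
    induction hnj with
    | refl => exact le_rfl
    | step _ ih => exact ih.trans (hmmono _ ω)
  have hmk : ∀ n ω, ks n ω ≤ m n ω := by
    intro n ω
    cases n with
    | zero => exact le_rfl
    | succ n => exact le_max_right _ _
  -- apply forward compactness
  obtain ⟨h, hl, hcomb, hhlK, hconv_ae⟩ := hforward m hmK
  -- h n ≥ m n pointwise
  have hhm : ∀ n ω, m n ω ≤ h n ω := by
    intro n ω
    obtain ⟨mm, w, hwm, hw0, hw1, hheq⟩ := hcomb n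
    rw [hheq ω]
    calc m n ω = ∑ i ∈ Finset.range mm, w i ω * m n ω := by
          rw [← Finset.sum_mul, hw1 ω, one_mul]
      _ ≤ ∑ i ∈ Finset.range mm, w i ω * m (n + i) ω := by
          refine Finset.sum_le_sum fun i _ => ?_
          exact mul_le_mul_of_nonneg_left (hmmono' n (n + i) ω (Nat.le_add_right n i))
            (hw0 i ω)
  -- h n is measurable
  have hhmeas : ∀ n, Measurable[G] (h n) := by
    intro n
    obtain ⟨mm, w, hwm, hw0, hw1, hheq⟩ := hcomb n
    have : h n = fun ω => ∑ i ∈ Finset.range mm, w i ω * m (n + i) ω := funext hheq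
    rw [this]
    exact Finset.measurable_sum _ fun i _ =>
      (hwm i).mul (hmeasG _ (hmK (n + i)))
  have hhlmeas : Measurable[G] hl := hmeasG hl hhlK
  -- dominated convergence
  have hdct : Tendsto (fun n => I (h n)) atTop (𝓝 (I hl)) := by
    refine tendsto_integral_of_dominated_convergence (μ := P) (fun _ => Real.pi / 2)
      (fun n => ?_) (integrable_const _) (fun n => ?_) ?_
    · exact (Real.measurable_arctan.comp (hhmeas n)).aestronglyMeasurable
    · filter_upwards with ω
      rw [Real.norm_eq_abs, abs_le]
      exact ⟨(Real.neg_pi_div_two_lt_arctan _).le, (Real.arctan_lt_pi_div_two _).le⟩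
    · filter_upwards [hconv_ae] with ω hω
      exact (Real.continuous_arctan.tendsto _).comp hω
  -- I hl = s
  have hIle : ∀ f ∈ K, I f ≤ s := fun f hf => le_csSup hSbdd ⟨f, hf, rfl⟩
  have hIhl : I hl = s := by
    refine le_antisymm (hIle hl hhlK) ?_
    have haux : Tendsto (fun n : ℕ => s - 1 / (n + 1 : ℝ)) atTop (𝓝 s) := by
      have : Tendsto (fun n : ℕ => 1 / (n + 1 : ℝ)) atTop (𝓝 0) :=
        tendsto_one_div_add_atTop_nhds_zero_nat
      simpa using tendsto_const_nhds.sub this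
    refine le_of_tendsto_of_tendsto' haux hdct fun n => ?_
    calc s - 1 / (n + 1 : ℝ) ≤ I (ks n) := (hksI n).le
      _ ≤ I (m n) := by
          refine integral_mono (μ := P) (arctan_integrable (hmeasG _ (hksK n)))
            (arctan_integrable (hmeasG _ (hmK n))) fun ω => ?_
          exact Real.arctan_strictMono.monotone (hmk n ω)
      _ ≤ I (h n) := by
          refine integral_mono (μ := P) (arctan_integrable (hmeasG _ (hmK n)))
            (arctan_integrable (hhmeas n)) fun ω => ?_
          exact Real.arctan_strictMono.monotone (hhm n ω)
  -- conclude: every k ∈ K is ≤ hl a.e.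
  refine ⟨hl, fun k hk => ?_⟩
  have hmaxK : (fun ω => max (k ω) (hl ω)) ∈ K :=
    max_mem hconv hk hhlK (hmeasG k hk) (hmeasG hl hhlK)
  have hint1 : Integrable (fun ω => Real.arctan (max (k ω) (hl ω))) P :=
    arctan_integrable (hmeasG _ hmaxK)
  have hint2 : Integrable (fun ω => Real.arctan (hl ω)) P := arctan_integrable hhlmeas
  set d : Ω → ℝ := fun ω => Real.arctan (max (k ω) (hl ω)) - Real.arctan (hl ω) with hd
  have hd0 : 0 ≤ d := fun ω =>
    sub_nonneg.2 (Real.arctan_strictMono.monotone (le_max_right _ _))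
  have hdi : Integrable d P := hint1.sub hint2
  have hdint : ∫ ω, d ω ∂P = 0 := by
    have : ∫ ω, d ω ∂P = I (fun ω => max (k ω) (hl ω)) - I hl := integral_sub (μ := P) hint1 hint2
    rw [this]
    have h1 : I (fun ω => max (k ω) (hl ω)) ≤ s := hIle _ hmaxK
    have h2 : s ≤ I (fun ω => max (k ω) (hl ω)) := by
      rw [← hIhl]
      refine integral_mono (μ := P) hint2 hint1 fun ω => ?_
      exact Real.arctan_strictMono.monotone (le_max_right _ _)
    rw [hIhl]
    linarith
  have hdae : d =ᵐ[P] 0 := (integral_eq_zero_iff_of_nonneg (μ := P) hd0 hdi).1 hdint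
  filter_upwards [hdae] with ω hω
  have : Real.arctan (max (k ω) (hl ω)) = Real.arctan (hl ω) := by
    have := sub_eq_zero.1 (by simpa [hd] using hω)
    exact this
  have hmax : max (k ω) (hl ω) = hl ω := Real.arctan_injective this
  exact (max_le_iff.1 hmax.le).1
end

section
/- (Existence of $\mathcal{G}$-convex $r$-nets) Let $K \subseteq L^0(\mathcal{G})$ be $\mathcal{G}$-convexly compact, and let $d$ be a metric on $L^0$ compatible with convergence in probability. Then for every $r > 0$ there exists a finite set $\mathcal{K} = \{k_1,\ldots,k_n\} \subseteq K$ such that every $x \in K$ satisfies $d(x, y) \leq r$ for some $y \in \operatorname{conv}_{\mathcal{G}}(\mathcal{K})$, the set of finite $\mathcal{G}$-convex combinations of elements of $\mathcal{K}$. -/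
open MeasureTheory Filter Set
open scoped ENNReal Topology

/-!
`K` is a lattice: `a ⊔ b` is the `G`-convex combination of `a` and `b` with weight `1_{a > b}`.
An increasing sequence in `K` lies below its forward convex combinations, so their a.s.
convergence bounds it and forces its increments to vanish a.s. Hence `K` contains `m ≤ M`
that are minimal (via `-K`) and maximal up to `r / 2` for `E[min((·)⁺, 1)]`, and every `x ∈ K`
is within `r` of its clamp `max m (min x M)`, which is a `G`-convex combination of `m` and `M`.
-/

open scoped Pointwise

section GConvexity

variable {Ω : Type*}

def GConvex (G : MeasurableSpace Ω) (K : Set (Ω → ℝ)) : Prop :=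
  ∀ x ∈ K, ∀ y ∈ K, ∀ g : Ω → ℝ, Measurable[G] g → (∀ ω, 0 ≤ g ω ∧ g ω ≤ 1) →
    (fun ω => g ω * x ω + (1 - g ω) * y ω) ∈ K

def TailConvexCombsConvergeAE (G : MeasurableSpace Ω) (P : Measure Ω)
    (K : Set (Ω → ℝ)) : Prop :=
  ∀ k : ℕ → Ω → ℝ, (∀ n, k n ∈ K) →
    ∃ (h : ℕ → Ω → ℝ) (hl : Ω → ℝ), (∀ n, GTailConvexComb G k n (h n)) ∧
      ∀ᵐ ω ∂P, Tendsto (fun n => h n ω) atTop (𝓝 (hl ω))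

section TailConvexComb

variable {G : MeasurableSpace Ω} {k : ℕ → Ω → ℝ} {n : ℕ} {h : Ω → ℝ}

theorem GTailConvexComb.neg (hh : GTailConvexComb G k n h) : GTailConvexComb G (-k) n (-h) := by
  obtain ⟨m, w, hw, hw0, hw1, hh⟩ := hh
  exact ⟨m, w, hw, hw0, hw1, fun ω => by simp [hh ω, Finset.sum_neg_distrib]⟩

theorem GTailConvexComb.apply_le_of_monotone (hh : GTailConvexComb G k n h) {ω : Ω}
    (hk : Monotone (k · ω)) : k n ω ≤ h ω := by
  obtain ⟨m, w, -, hw0, hw1, hh⟩ := hh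
  calc k n ω = ∑ i ∈ Finset.range m, w i ω * k n ω := by rw [← Finset.sum_mul, hw1, one_mul]
    _ ≤ ∑ i ∈ Finset.range m, w i ω * k (n + i) ω :=
      Finset.sum_le_sum fun i _ => mul_le_mul_of_nonneg_left (hk (Nat.le_add_right n i)) (hw0 i ω)
    _ = h ω := (hh ω).symm

end TailConvexComb

section Negation

variable {G : MeasurableSpace Ω} {K : Set (Ω → ℝ)}

theorem GConvex.neg (hK : GConvex G K) : GConvex G (-K) := by
  intro x hx y hy g hg hg01
  rw [Set.mem_neg]
  convert hK (-x) hx (-y) hy g hg hg01 using 1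
  funext ω
  simp only [Pi.neg_apply]
  ring

theorem TailConvexCombsConvergeAE.neg {P : Measure Ω}
    (hK : TailConvexCombsConvergeAE G P K) : TailConvexCombsConvergeAE G P (-K) := by
  intro k hk
  obtain ⟨h, hl, hh, hconv⟩ := hK (-k) hk
  refine ⟨-h, -hl, fun n => by simpa using (hh n).neg, ?_⟩
  filter_upwards [hconv] with ω hω
  simpa using hω.neg

end Negation

theorem GConvex.sup_mem {G : MeasurableSpace Ω} {K : Set (Ω → ℝ)} (hK : GConvex G K)
    (hKmeas : ∀ f ∈ K, Measurable[G] f) {a b : Ω → ℝ} (ha : a ∈ K) (hb : b ∈ K) : a ⊔ b ∈ K := by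
  convert hK a ha b hb (fun ω => if a ω ≤ b ω then 0 else 1)
    (Measurable.ite (measurableSet_le (hKmeas a ha) (hKmeas b hb)) measurable_const
      measurable_const) (fun ω => by split_ifs <;> norm_num) using 1
  funext ω
  by_cases hab : a ω ≤ b ω <;> simp [hab, le_of_not_ge]

theorem norm_min_one_le {a : ℝ} (ha : 0 ≤ a) : ‖min a 1‖ ≤ 1 := by
  rw [Real.norm_of_nonneg (le_min ha zero_le_one)]
  exact min_le_right _ _

section Convergence

variable [MeasurableSpace Ω] {P : Measure Ω}

theorem ae_tendsto_sub_zero_of_monotone {G : MeasurableSpace Ω} {k h : ℕ → Ω → ℝ} {hl : Ω → ℝ}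
    (hk : ∀ ω, Monotone (k · ω)) (hh : ∀ n, GTailConvexComb G k n (h n))
    (hconv : ∀ᵐ ω ∂P, Tendsto (fun n => h n ω) atTop (𝓝 (hl ω))) :
    ∀ᵐ ω ∂P, Tendsto (fun n => k (n + 1) ω - k n ω) atTop (𝓝 0) := by
  filter_upwards [hconv] with ω hω
  have hbdd : BddAbove (range (k · ω)) := by
    refine ⟨hl ω, ?_⟩
    rintro _ ⟨n, rfl⟩
    refine ge_of_tendsto hω ?_
    filter_upwards [eventually_ge_atTop n] with m hm
    exact (hk ω hm).trans ((hh m).apply_le_of_monotone (hk ω))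
  have hlim := tendsto_atTop_ciSup (hk ω) hbdd
  simpa using (hlim.comp (tendsto_add_atTop_nat 1)).sub hlim

theorem integrable_min_one [IsFiniteMeasure P] {f : Ω → ℝ} (hf : Measurable f)
    (hf0 : ∀ ω, 0 ≤ f ω) : Integrable (fun ω => min (f ω) 1) P :=
  (integrable_const 1).mono' (hf.min measurable_const).aestronglyMeasurable
    (ae_of_all _ fun ω => norm_min_one_le (hf0 ω))

theorem tendsto_integral_min_one_of_ae_tendsto_zero [IsFiniteMeasure P] {f : ℕ → Ω → ℝ}
    (hf : ∀ n, Measurable (f n)) (hf0 : ∀ n ω, 0 ≤ f n ω)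
    (hlim : ∀ᵐ ω ∂P, Tendsto (fun n => f n ω) atTop (𝓝 0)) :
    Tendsto (fun n => ∫ ω, min (f n ω) 1 ∂P) atTop (𝓝 0) := by
  have := tendsto_integral_of_dominated_convergence (μ := P) (fun _ => 1)
    (fun n => ((hf n).min measurable_const).aestronglyMeasurable) (integrable_const 1)
    (fun n => ae_of_all _ fun ω => norm_min_one_le (hf0 n ω))
    (by
      filter_upwards [hlim] with ω hω
      simpa using hω.min (tendsto_const_nhds (x := (1 : ℝ))))
  simpa using this

end Convergence

section ApproxBounds

variable {G : MeasurableSpace Ω} {P : Measure Ω} [IsFiniteMeasure P] {K : Set (Ω → ℝ)}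

/-- If no such `M` existed, the running maxima `u (n+1) = u n ⊔ x n` of witnesses `x n` would
increase by more than `s` in `E[min(·,1)]` at every step, against
`ae_tendsto_sub_zero_of_monotone`. -/
theorem exists_approx_upper_bound_ge (hKmeas : ∀ f ∈ K, Measurable f)
    (hconv : GConvex G K) (hlim : TailConvexCombsConvergeAE G P K) {f₀ : Ω → ℝ} (hf₀ : f₀ ∈ K)
    {s : ℝ} (hs : 0 < s) :
    ∃ M ∈ K, f₀ ≤ M ∧ ∀ x ∈ K, ∫ ω, min (max (x ω - M ω) 0) 1 ∂P ≤ s := by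
  by_contra! hcon
  choose! next hnextK hnext using hcon
  set u : ℕ → Ω → ℝ := fun n => (fun M => M ⊔ next M)^[n] f₀
  have hu_succ (n : ℕ) : u (n + 1) = u n ⊔ next (u n) := Function.iterate_succ_apply' _ _ _
  have hu (n : ℕ) : u n ∈ K ∧ f₀ ≤ u n := by
    induction n with
    | zero => exact ⟨hf₀, le_rfl⟩
    | succ n ih =>
      rw [hu_succ]
      exact ⟨hconv.sup_mem hKmeas ih.1 (hnextK _ ih.1 ih.2), ih.2.trans le_sup_left⟩
  have hmono (ω : Ω) : Monotone (u · ω) :=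
    monotone_nat_of_le_succ fun n => by rw [hu_succ]; exact le_sup_left
  have hgap (n : ℕ) (ω : Ω) : u (n + 1) ω - u n ω = max (next (u n) ω - u n ω) 0 := by
    rw [hu_succ, Pi.sup_apply]; grind
  obtain ⟨h, hl, hh, hhl⟩ := hlim u fun n => (hu n).1
  have hint := tendsto_integral_min_one_of_ae_tendsto_zero (P := P)
    (f := fun n ω => u (n + 1) ω - u n ω)
    (fun n => (hKmeas _ (hu (n + 1)).1).sub (hKmeas _ (hu n).1))
    (fun n ω => sub_nonneg.2 (hmono ω n.le_succ)) (ae_tendsto_sub_zero_of_monotone hmono hh hhl)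
  simp only [hgap] at hint
  have := ge_of_tendsto' hint fun n => (hnext _ (hu n).1 (hu n).2).le
  linarith

theorem exists_approx_lower_bound (hKmeas : ∀ f ∈ K, Measurable f)
    (hconv : GConvex G K) (hlim : TailConvexCombsConvergeAE G P K) (hne : K.Nonempty)
    {s : ℝ} (hs : 0 < s) :
    ∃ m ∈ K, ∀ x ∈ K, ∫ ω, min (max (m ω - x ω) 0) 1 ∂P ≤ s := by
  obtain ⟨f₀, hf₀⟩ := hne.neg
  obtain ⟨M, hM, -, hMle⟩ := exists_approx_upper_bound_ge (P := P)
    (fun f hf => by simpa using (hKmeas _ hf).neg) hconv.neg hlim.neg hf₀ hs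
  refine ⟨-M, hM, fun x hx => ?_⟩
  simpa [neg_sub_comm] using hMle (-x) (by simpa using hx)

end ApproxBounds

theorem GConvexlyCompact.tailConvexCombsConvergeAE {G : MeasurableSpace Ω} {P : Measure Ω}
    {K : Set (Ω → ℝ)} (hcc : GConvexlyCompact G P K) : TailConvexCombsConvergeAE G P K :=
  fun k hk =>
    let ⟨h, hl, hh, _, hconv⟩ := hcc.2.2 k hk
    ⟨h, hl, hh, hconv⟩

theorem min_abs_sub_clamp_le {m M x : ℝ} (hmM : m ≤ M) :
    min |x - max m (min x M)| 1 ≤ min (max (x - M) 0) 1 + min (max (m - x) 0) 1 := by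
  grind

/-- The weights are `t = (M - y) / (M - m)` and `1 - t`, where `y` is `x` clamped to `[m, M]`;
where `m = M`, Lean's `0 / 0 = 0` gives `t = 0`, which still works. -/
theorem exists_weights_eq_clamp [MeasurableSpace Ω] {m M x : Ω → ℝ} (hm : Measurable m)
    (hM : Measurable M) (hx : Measurable x) (hmM : m ≤ M) :
    ∃ w : Fin 2 → Ω → ℝ, (∀ i, Measurable (w i)) ∧ (∀ i ω, 0 ≤ w i ω) ∧ (∀ ω, ∑ i, w i ω = 1) ∧
      ∀ ω, ∑ i, w i ω * ![m, M] i ω = max (m ω) (min (x ω) (M ω)) := by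
  set y : Ω → ℝ := fun ω => max (m ω) (min (x ω) (M ω))
  set t : Ω → ℝ := fun ω => (M ω - y ω) / (M ω - m ω)
  have hy_mem (ω : Ω) : m ω ≤ y ω ∧ y ω ≤ M ω :=
    ⟨le_max_left _ _, max_le (hmM ω) (min_le_right _ _)⟩
  have ht_mul (ω : Ω) : t ω * (M ω - m ω) = M ω - y ω :=
    div_mul_cancel_of_imp fun h => by grind [hy_mem ω]
  refine ⟨![t, 1 - t], fun i => ?_, fun i ω => ?_, fun ω => ?_, fun ω => ?_⟩
  · have hy : Measurable y := hm.max (hx.min hM)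
    fin_cases i
    · exact (hM.sub hy).div (hM.sub hm)
    · exact measurable_const.sub ((hM.sub hy).div (hM.sub hm))
  · have ht : 0 ≤ t ω ∧ t ω ≤ 1 :=
      ⟨div_nonneg (by grind [hy_mem ω]) (by grind [hmM ω]),
        div_le_one_of_le₀ (by grind [hy_mem ω]) (by grind [hmM ω])⟩
    fin_cases i <;> simp [ht.1, ht.2]
  · simp
  · simp only [Fin.sum_univ_two, Matrix.cons_val_zero, Matrix.cons_val_one, Pi.sub_apply,
      Pi.one_apply]
    linear_combination -ht_mul ω

end GConvexity

theorem stmt15_general {Ω : Type*} (G : MeasurableSpace Ω)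
    (P : Measure Ω) [IsProbabilityMeasure P]
    (K : Set (Ω → ℝ)) (hK : ∀ f ∈ K, Measurable[G] f) (hcc : GConvexlyCompact G P K) :
    ∀ r : ℝ, 0 < r →
      ∃ (n : ℕ) (k : Fin n → Ω → ℝ), (∀ i, k i ∈ K) ∧
        ∀ x ∈ K, ∃ w : Fin n → Ω → ℝ,
          (∀ i, Measurable[G] (w i)) ∧ (∀ i ω, 0 ≤ w i ω) ∧ (∀ ω, ∑ i, w i ω = 1) ∧
          (∫ ω, min |x ω - ∑ i, w i ω * k i ω| 1 ∂P) ≤ r := by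
  intro r hr
  rcases K.eq_empty_or_nonempty with rfl | hne
  · exact ⟨0, Fin.elim0, Fin.elim0, fun x hx => hx.elim⟩
  obtain ⟨m, hm, hm_le⟩ := exists_approx_lower_bound hK hcc.1
    hcc.tailConvexCombsConvergeAE hne (half_pos hr)
  obtain ⟨M, hM, hmM, hM_le⟩ := exists_approx_upper_bound_ge hK hcc.1
    hcc.tailConvexCombsConvergeAE hm (half_pos hr)
  refine ⟨2, ![m, M], fun i => by fin_cases i <;> assumption, fun x hx => ?_⟩
  obtain ⟨w, hw, hw0, hw1, hwx⟩ := exists_weights_eq_clamp (hK m hm) (hK M hM) (hK x hx) hmM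
  have hint {f : Ω → ℝ} (hf : Measurable f) : Integrable (fun ω => min (max (f ω) 0) 1) P :=
    integrable_min_one (hf.max measurable_const) fun _ => le_max_right _ _
  refine ⟨w, hw, hw0, hw1, ?_⟩
  calc ∫ ω, min |x ω - ∑ i, w i ω * ![m, M] i ω| 1 ∂P
      ≤ ∫ ω, (min (max (x ω - M ω) 0) 1 + min (max (m ω - x ω) 0) 1) ∂P := by
        simp only [hwx]
        exact integral_mono_of_nonneg (ae_of_all _ fun _ => by positivity)
          ((hint ((hK x hx).sub (hK M hM))).add (hint ((hK m hm).sub (hK x hx))))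
          (ae_of_all _ fun ω => min_abs_sub_clamp_le (hmM ω))
    _ = (∫ ω, min (max (x ω - M ω) 0) 1 ∂P) + ∫ ω, min (max (m ω - x ω) 0) 1 ∂P :=
        integral_add (hint ((hK x hx).sub (hK M hM))) (hint ((hK m hm).sub (hK x hx)))
    _ ≤ r / 2 + r / 2 := add_le_add (hM_le x hx) (hm_le x hx)
    _ = r := add_halves r

/-- Existence of finite `𝒢`-convex `r`-nets in a `𝒢`-convexly compact set `K ⊆ L⁰(𝒢)`:
for every `r > 0` there are finitely many `k₁, …, kₙ ∈ K` such that every `x ∈ K` is within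
distance `r` (in the metric `d(X,Y) = E[min(|X-Y|,1)]` of convergence in probability) of some
`𝒢`-convex combination of the `kᵢ`. -/
theorem stmt15 {Ω : Type*} [F : MeasurableSpace Ω] (G : MeasurableSpace Ω) (hG : G ≤ F)
    (P : Measure Ω) [IsProbabilityMeasure P]
    (K : Set (Ω → ℝ)) (hK : ∀ f ∈ K, Measurable[G] f) (hcc : GConvexlyCompact G P K) :
    ∀ r : ℝ, 0 < r →
      ∃ (n : ℕ) (k : Fin n → Ω → ℝ), (∀ i, k i ∈ K) ∧
        ∀ x ∈ K, ∃ w : Fin n → Ω → ℝ,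
          (∀ i, Measurable[G] (w i)) ∧ (∀ i ω, 0 ≤ w i ω) ∧ (∀ ω, ∑ i, w i ω = 1) ∧
          (∫ ω, min |x ω - ∑ i, w i ω * k i ω| 1 ∂P) ≤ r :=
  stmt15_general G P K hK hcc
end

section
/- (Locality of the conditional dual value function) Let $\tau$ be a stopping time, $V$ a convex decreasing function on $(0,\infty)$, $Z$ a positive random variable, and $\mathcal{Y}$ a nonempty family of positive random variables. Define $v(\eta) = \operatorname{essinf}_{Y \in \mathcal{Y}} E[V(Z \eta Y) \mid \mathcal{F}_\tau]$ for $\eta \in L^0_{++}(\mathcal{F}_\tau)$. Then for any $A \in \mathcal{F}_\tau$ and $\eta_1, \eta_2 \in L^0_{++}(\mathcal{F}_\tau)$: $v(1_A \eta_1 + 1_{A^c}\eta_2) = 1_A v(\eta_1) + 1_{A^c} v(\eta_2)$ almost surely, provided all the conditional expectations involved are a.s. finite. -/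
open MeasureTheory Filter Set
open scoped ENNReal Topology

/-- The σ-algebra `ℱ_τ` of a stopping time with its December-2024 Mathlib meaning:
`{s | ∀ i, s ∩ {τ ≤ i} ∈ ℱ i}` (without the newer extra condition `s ∈ ⨆ i, ℱ i`). -/
def MeasureTheory.IsStoppingTime.measurableSpaceOld {Ω ι : Type*} [Preorder ι]
    {m : MeasurableSpace Ω} {f : Filtration ι m} {τ : Ω → WithTop ι}
    (hτ : IsStoppingTime f τ) : MeasurableSpace Ω where
  MeasurableSet' s := ∀ i : ι, MeasurableSet[f i] (s ∩ {ω | τ ω ≤ i})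
  measurableSet_empty i := by
    rw [Set.empty_inter]
    exact @MeasurableSet.empty _ (f i)
  measurableSet_compl s hs i := by
    rw [(_ : sᶜ ∩ {ω | τ ω ≤ i} = (sᶜ ∪ {ω | τ ω ≤ i}ᶜ) ∩ {ω | τ ω ≤ i})]
    · refine MeasurableSet.inter ?_ ?_
      · rw [← Set.compl_inter]
        exact (hs i).compl
      · exact hτ i
    · rw [Set.union_inter_distrib_right]
      simp only [Set.compl_inter_self, Set.union_empty]
  measurableSet_iUnion s hs i := by
    rw [Set.iUnion_inter]
    exact @MeasurableSet.iUnion _ _ (f i) _ _ (fun j => hs j i)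

/-!
Conditional expectation commutes with `1_A` for `A ∈ ℱ_τ`, so the family defining `vc` is
`1_A E[V(Zη₁Y)|ℱ_τ] + 1_{Aᶜ} E[V(Zη₂Y)|ℱ_τ]`. An essential infimum is local on `ℱ_τ`-sets:
on `A`, an `ℱ_τ`-measurable lower bound of one family glued with a lower bound of the other
off `A` is again a lower bound. Since `v₁, v₂, vc` are determined only a.e. and need not be
`ℱ_τ`-measurable, they are first replaced by measurable versions: `tan` of the infimum of
`arctan ∘ F` along a countable subfamily that minimises its integral is a measurable essential
infimum.
-/

open Real

lemma Measurable.tan {Ω : Type*} {m : MeasurableSpace Ω} {f : Ω → ℝ} (hf : Measurable f) :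
    Measurable fun ω => tan (f ω) := by
  simp only [tan_eq_sin_div_cos]
  exact hf.sin.div hf.cos

lemma tan_le_iff_le_arctan {x y : ℝ} (hx : x ∈ Ioo (-(π / 2)) (π / 2)) :
    tan x ≤ y ↔ x ≤ arctan y := by
  rw [← arctan_strictMono.le_iff_le, arctan_tan hx.1 hx.2]

lemma le_tan_iff_arctan_le {x y : ℝ} (hx : x ∈ Ioo (-(π / 2)) (π / 2)) :
    y ≤ tan x ↔ arctan y ≤ x := by
  rw [← arctan_strictMono.le_iff_le, arctan_tan hx.1 hx.2]

section EssInf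

variable {Ω α : Type*} {m mΩ : MeasurableSpace Ω} {μ : Measure Ω}

/-- `arctan` keeps the infima bounded, hence integrable for any finite measure. -/
noncomputable def arctanInf (F : α → Ω → ℝ) (u : ℕ → α) (ω : Ω) : ℝ :=
  ⨅ n, arctan (F (u n) ω)

variable {F : α → Ω → ℝ}

lemma arctanInf_le (u : ℕ → α) (n : ℕ) (ω : Ω) : arctanInf F u ω ≤ arctan (F (u n) ω) :=
  ciInf_le ⟨-(π / 2), by rintro _ ⟨k, rfl⟩; exact (neg_pi_div_two_lt_arctan _).le⟩ n

lemma le_arctanInf {u : ℕ → α} {ω : Ω} {c : ℝ} (h : ∀ n, c ≤ arctan (F (u n) ω)) :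
    c ≤ arctanInf F u ω :=
  le_ciInf h

lemma arctanInf_mem_Icc (u : ℕ → α) (ω : Ω) : arctanInf F u ω ∈ Icc (-(π / 2)) (π / 2) :=
  ⟨le_arctanInf fun _ => (neg_pi_div_two_lt_arctan _).le,
    (arctanInf_le u 0 ω).trans (arctan_lt_pi_div_two _).le⟩

lemma arctanInf_le_arctanInf {u u' : ℕ → α} (h : ∀ n, ∃ k, u' k = u n) (ω : Ω) :
    arctanInf F u' ω ≤ arctanInf F u ω :=
  le_arctanInf fun n => by
    obtain ⟨k, hk⟩ := h n
    exact hk ▸ arctanInf_le u' k ω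

lemma measurable_arctanInf (hF : ∀ a, Measurable[m] (F a)) (u : ℕ → α) :
    Measurable[m] (arctanInf F u) :=
  Measurable.iInf fun n => (hF (u n)).arctan

lemma integrable_arctanInf [IsFiniteMeasure μ] (hF : ∀ a, Measurable (F a)) (u : ℕ → α) :
    Integrable (arctanInf F u) μ :=
  (integrable_const (π / 2)).mono' (measurable_arctanInf hF u).aestronglyMeasurable
    (ae_of_all _ fun ω => abs_le.2 (arctanInf_mem_Icc u ω))

/-- A sequence minimising `∫ arctanInf F u` (merged from a minimising sequence of sequences)
yields an a.e. lower bound of the whole family: appending any `a` cannot lower the integral. -/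
lemma exists_forall_ae_arctanInf_le [IsFiniteMeasure μ] [Nonempty α]
    (hF : ∀ a, Measurable (F a)) :
    ∃ u : ℕ → α, ∀ a, ∀ᵐ ω ∂μ, arctanInf F u ω ≤ arctan (F a ω) := by
  set J : (ℕ → α) → ℝ := fun u => ∫ ω, arctanInf F u ω ∂μ
  have hJ_mono : ∀ {u u' : ℕ → α}, (∀ n, ∃ k, u' k = u n) → J u' ≤ J u := fun h =>
    integral_mono (integrable_arctanInf hF _) (integrable_arctanInf hF _)
      (arctanInf_le_arctanInf h)
  have hJ_bdd : BddBelow (range J) := ⟨∫ _, -(π / 2) ∂μ, by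
    rintro _ ⟨u, rfl⟩
    exact integral_mono (integrable_const _) (integrable_arctanInf hF u)
      fun ω => (arctanInf_mem_Icc u ω).1⟩
  obtain ⟨x, -, hx_lim, hx⟩ := exists_seq_tendsto_sInf (range_nonempty J) hJ_bdd
  choose u hu using hx
  let u₀ : ℕ → α := fun n => u (Nat.unpair n).1 (Nat.unpair n).2
  have hJu₀ : J u₀ ≤ sInf (range J) :=
    ge_of_tendsto' hx_lim fun k =>
      (hJ_mono (u := u k) fun n => ⟨Nat.pair k n, by simp [u₀]⟩).trans_eq (hu k)
  refine ⟨u₀, fun a => ?_⟩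
  let u' : ℕ → α := fun n => if n = 0 then a else u₀ (n - 1)
  have hu'_le : arctanInf F u' ≤ arctanInf F u₀ :=
    arctanInf_le_arctanInf fun n => ⟨n + 1, by simp [u']⟩
  have hJ_eq : J u' = J u₀ :=
    (hJ_mono fun n => ⟨n + 1, by simp [u']⟩).antisymm
      (hJu₀.trans (csInf_le hJ_bdd ⟨u', rfl⟩))
  filter_upwards [(integral_eq_iff_of_ae_le (integrable_arctanInf hF _)
    (integrable_arctanInf hF _) (ae_of_all _ hu'_le)).1 hJ_eq] with ω hω
  rw [← hω]
  simpa [u'] using arctanInf_le u' 0 ω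

lemma exists_measurable_forall_ae_le [IsFiniteMeasure μ] (hm : m ≤ mΩ) {s : Set α}
    (hs : s.Nonempty) (hF : ∀ a ∈ s, Measurable[m] (F a)) {v : Ω → ℝ} (hv : ∀ a ∈ s, v ≤ᵐ[μ] F a) :
    ∃ w, Measurable[m] w ∧ (∀ a ∈ s, w ≤ᵐ[μ] F a) ∧ v ≤ᵐ[μ] w := by
  have : Nonempty s := hs.to_subtype
  let G : s → Ω → ℝ := fun a => F a
  have hG : ∀ a, Measurable[m] (G a) := fun a => hF a a.2
  obtain ⟨u, hu⟩ := exists_forall_ae_arctanInf_le (μ := μ) fun a => (hG a).mono hm le_rfl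
  have hv_le : ∀ᵐ ω ∂μ, arctan (v ω) ≤ arctanInf G u ω := by
    filter_upwards [ae_all_iff.2 fun n => hv (u n) (u n).2] with ω hω
    exact le_arctanInf fun n => arctan_strictMono.monotone (hω n)
  have h_mem : ∀ᵐ ω ∂μ, arctanInf G u ω ∈ Ioo (-(π / 2)) (π / 2) := by
    filter_upwards [hv_le] with ω hω
    exact ⟨(neg_pi_div_two_lt_arctan _).trans_le hω,
      (arctanInf_le u 0 ω).trans_lt (arctan_lt_pi_div_two _)⟩
  refine ⟨fun ω => tan (arctanInf G u ω), (measurable_arctanInf hG u).tan,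
    fun a ha => ?_, ?_⟩
  · filter_upwards [hu ⟨a, ha⟩, h_mem] with ω hω hω_mem
    exact (tan_le_iff_le_arctan hω_mem).2 hω
  · filter_upwards [hv_le, h_mem] with ω hω hω_mem
    exact (le_tan_iff_arctan_le hω_mem).2 hω

/-- `v` is `essinf_{a ∈ s} F a` relative to `m`; `v` itself is not required to be
`m`-measurable. -/
def IsEssInf (m : MeasurableSpace Ω) (μ : Measure[mΩ] Ω) (s : Set α) (F : α → Ω → ℝ)
    (v : Ω → ℝ) : Prop :=
  (∀ a ∈ s, v ≤ᵐ[μ] F a) ∧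
    ∀ w : Ω → ℝ, Measurable[m] w → (∀ a ∈ s, w ≤ᵐ[μ] F a) → w ≤ᵐ[μ] v

namespace IsEssInf

variable {s : Set α} {v w : Ω → ℝ}

lemma congr_ae (h : IsEssInf m μ s F v) (hvw : v =ᵐ[μ] w) : IsEssInf m μ s F w :=
  ⟨fun a ha => hvw.symm.le.trans (h.1 a ha),
    fun u hu huF => (h.2 u hu huF).trans hvw.le⟩

lemma ae_eq (hv : IsEssInf m μ s F v) (hw : IsEssInf m μ s F w)
    (hv_meas : Measurable[m] v) (hw_meas : Measurable[m] w) : v =ᵐ[μ] w :=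
  (hw.2 v hv_meas hv.1).antisymm (hv.2 w hw_meas hw.1)

lemma exists_measurable_ae_eq [IsFiniteMeasure μ] (hm : m ≤ mΩ) (hs : s.Nonempty)
    (hF : ∀ a ∈ s, Measurable[m] (F a)) (h : IsEssInf m μ s F v) :
    ∃ w, Measurable[m] w ∧ IsEssInf m μ s F w ∧ v =ᵐ[μ] w := by
  obtain ⟨w, hw, hwF, hvw⟩ := exists_measurable_forall_ae_le hm hs hF h.1
  have hvw : v =ᵐ[μ] w := hvw.antisymm (h.2 w hw hwF)
  exact ⟨w, hw, h.congr_ae hvw, hvw⟩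

lemma piecewise {G H : α → Ω → ℝ} {v₁ v₂ : Ω → ℝ} {A : Set Ω} [DecidablePred (· ∈ A)]
    (hA : MeasurableSet[m] A) (h₁ : IsEssInf m μ s F v₁) (h₂ : IsEssInf m μ s G v₂)
    (hv₁ : Measurable[m] v₁) (hv₂ : Measurable[m] v₂)
    (hH : ∀ a ∈ s, H a =ᵐ[μ] A.piecewise (F a) (G a)) :
    IsEssInf m μ s H (A.piecewise v₁ v₂) := by
  refine ⟨fun a ha => ?_, fun u hu huH => ?_⟩
  · filter_upwards [h₁.1 a ha, h₂.1 a ha, hH a ha] with ω hF hG hH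
    by_cases hω : ω ∈ A <;> simp [hω, hF, hG, hH]
  · have hF : A.piecewise u v₁ ≤ᵐ[μ] v₁ := by
      refine h₁.2 _ (hu.piecewise hA hv₁) fun a ha => ?_
      filter_upwards [h₁.1 a ha, huH a ha, hH a ha] with ω hF hu hH
      by_cases hω : ω ∈ A <;> simp_all
    have hG : A.piecewise v₂ u ≤ᵐ[μ] v₂ := by
      refine h₂.2 _ (hv₂.piecewise hA hu) fun a ha => ?_
      filter_upwards [h₂.1 a ha, huH a ha, hH a ha] with ω hG hu hH
      by_cases hω : ω ∈ A <;> simp_all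
    filter_upwards [hF, hG] with ω hF hG
    by_cases hω : ω ∈ A <;> simp_all

end IsEssInf

lemma condExp_piecewise (hm : m ≤ mΩ) {A : Set Ω} [DecidablePred (· ∈ A)]
    (hA : MeasurableSet[m] A) {f g : Ω → ℝ} (hf : Integrable f μ) (hg : Integrable g μ) :
    μ[A.piecewise f g | m] =ᵐ[μ] A.piecewise (μ[f | m]) (μ[g | m]) := by
  rw [← indicator_add_compl_eq_piecewise, ← indicator_add_compl_eq_piecewise]
  exact (condExp_add (hf.indicator (hm _ hA)) (hg.indicator (hm _ hA.compl)) m).trans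
    ((condExp_indicator hf hA).add (condExp_indicator hg hA.compl))

end EssInf

theorem stmt17_general {Ω ι : Type*} [LinearOrder ι] {mΩ : MeasurableSpace Ω}
    (P : Measure Ω) [IsProbabilityMeasure P]
    (ℱ : Filtration ι mΩ) (τ : Ω → ι) (hτ : IsStoppingTime ℱ (fun ω => (τ ω : WithTop ι)))
    (hle : hτ.measurableSpaceOld ≤ mΩ)
    (V : ℝ → ℝ)
    (Z : Ω → ℝ)
    (𝒴 : Set (Ω → ℝ)) (h𝒴ne : 𝒴.Nonempty)
    (η₁ η₂ : Ω → ℝ)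
    (A : Set Ω) (hA : MeasurableSet[hτ.measurableSpaceOld] A)
    -- all the conditional expectations involved are well-defined (integrability)
    (hint₁ : ∀ Y ∈ 𝒴, Integrable (fun ω => V (Z ω * η₁ ω * Y ω)) P)
    (hint₂ : ∀ Y ∈ 𝒴, Integrable (fun ω => V (Z ω * η₂ ω * Y ω)) P)
    (v₁ v₂ vc : Ω → ℝ)
    -- v₁ = essinf_{Y ∈ 𝒴} E[V(Zη₁Y)|ℱ_τ]
    (hv₁lb : ∀ Y ∈ 𝒴, ∀ᵐ ω ∂P,
      v₁ ω ≤ condExp hτ.measurableSpaceOld P (fun ω' => V (Z ω' * η₁ ω' * Y ω')) ω)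
    (hv₁glb : ∀ w : Ω → ℝ, Measurable[hτ.measurableSpaceOld] w →
      (∀ Y ∈ 𝒴, ∀ᵐ ω ∂P,
        w ω ≤ condExp hτ.measurableSpaceOld P (fun ω' => V (Z ω' * η₁ ω' * Y ω')) ω) →
      ∀ᵐ ω ∂P, w ω ≤ v₁ ω)
    -- v₂ = essinf_{Y ∈ 𝒴} E[V(Zη₂Y)|ℱ_τ]
    (hv₂lb : ∀ Y ∈ 𝒴, ∀ᵐ ω ∂P,
      v₂ ω ≤ condExp hτ.measurableSpaceOld P (fun ω' => V (Z ω' * η₂ ω' * Y ω')) ω)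
    (hv₂glb : ∀ w : Ω → ℝ, Measurable[hτ.measurableSpaceOld] w →
      (∀ Y ∈ 𝒴, ∀ᵐ ω ∂P,
        w ω ≤ condExp hτ.measurableSpaceOld P (fun ω' => V (Z ω' * η₂ ω' * Y ω')) ω) →
      ∀ᵐ ω ∂P, w ω ≤ v₂ ω)
    -- vc = essinf_{Y ∈ 𝒴} E[V(Z(1_A η₁ + 1_{Aᶜ} η₂)Y)|ℱ_τ]
    (hvclb : ∀ Y ∈ 𝒴, ∀ᵐ ω ∂P,
      vc ω ≤ condExp hτ.measurableSpaceOld P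
        (fun ω' => V (Z ω' * (A.indicator η₁ ω' + Aᶜ.indicator η₂ ω') * Y ω')) ω)
    (hvcglb : ∀ w : Ω → ℝ, Measurable[hτ.measurableSpaceOld] w →
      (∀ Y ∈ 𝒴, ∀ᵐ ω ∂P,
        w ω ≤ condExp hτ.measurableSpaceOld P
          (fun ω' => V (Z ω' * (A.indicator η₁ ω' + Aᶜ.indicator η₂ ω') * Y ω')) ω) →
      ∀ᵐ ω ∂P, w ω ≤ vc ω) :
    vc =ᵐ[P] fun ω => A.indicator v₁ ω + Aᶜ.indicator v₂ ω := by
  classical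
  set 𝒢 := hτ.measurableSpaceOld
  have hF : ∀ η : Ω → ℝ, ∀ Y ∈ 𝒴,
      Measurable[𝒢] (P[fun ω => V (Z ω * η ω * Y ω) | 𝒢]) :=
    fun _ _ _ => stronglyMeasurable_condExp.measurable
  obtain ⟨w₁, hw₁, hw₁_inf, hv₁w₁⟩ :=
    IsEssInf.exists_measurable_ae_eq hle h𝒴ne (hF η₁) ⟨hv₁lb, hv₁glb⟩
  obtain ⟨w₂, hw₂, hw₂_inf, hv₂w₂⟩ :=
    IsEssInf.exists_measurable_ae_eq hle h𝒴ne (hF η₂) ⟨hv₂lb, hv₂glb⟩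
  obtain ⟨wc, hwc, hwc_inf, hvcwc⟩ :=
    IsEssInf.exists_measurable_ae_eq hle h𝒴ne (hF (A.indicator η₁ + Aᶜ.indicator η₂))
      ⟨hvclb, hvcglb⟩
  have h_split : ∀ Y ∈ 𝒴,
      P[fun ω => V (Z ω * (A.indicator η₁ ω + Aᶜ.indicator η₂ ω) * Y ω) | 𝒢] =ᵐ[P]
        A.piecewise (P[fun ω => V (Z ω * η₁ ω * Y ω) | 𝒢])
          (P[fun ω => V (Z ω * η₂ ω * Y ω) | 𝒢]) := by
    intro Y hY
    have h_eq : (fun ω => V (Z ω * (A.indicator η₁ ω + Aᶜ.indicator η₂ ω) * Y ω)) =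
        A.piecewise (fun ω => V (Z ω * η₁ ω * Y ω)) (fun ω => V (Z ω * η₂ ω * Y ω)) := by
      funext ω
      by_cases hω : ω ∈ A <;> simp [hω]
    rw [h_eq]
    exact condExp_piecewise hle hA (hint₁ Y hY) (hint₂ Y hY)
  have hwc_eq : wc =ᵐ[P] A.piecewise w₁ w₂ :=
    hwc_inf.ae_eq (hw₁_inf.piecewise hA hw₂_inf hw₁ hw₂ h_split) hwc (hw₁.piecewise hA hw₂)
  filter_upwards [hvcwc, hwc_eq, hv₁w₁, hv₂w₂] with ω hc h h₁ h₂
  by_cases hω : ω ∈ A <;> simp [hω, hc, h, h₁, h₂]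

/-- Locality of the conditional dual value function: for a stopping time `τ`, a convex
decreasing `V`, a positive random variable `Z` and an `ℱ_τ`-convex family `𝒴` of positive
random variables, the value function `v(η) = essinf_{Y ∈ 𝒴} E[V(Zηy)|ℱ_τ]` satisfies
`v(1_A η₁ + 1_{Aᶜ} η₂) = 1_A v(η₁) + 1_{Aᶜ} v(η₂)` a.s. for `A ∈ ℱ_τ` and
`η₁, η₂ ∈ L⁰₊₊(ℱ_τ)`.  The essential infima `v₁ = v(η₁)`, `v₂ = v(η₂)` and
`vc = v(1_A η₁ + 1_{Aᶜ} η₂)` are expressed through their characterizing properties. -/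
theorem stmt17 {Ω ι : Type*} [LinearOrder ι] {mΩ : MeasurableSpace Ω}
    (P : Measure Ω) [IsProbabilityMeasure P]
    (ℱ : Filtration ι mΩ) (τ : Ω → ι) (hτ : IsStoppingTime ℱ (fun ω => (τ ω : WithTop ι)))
    (hle : hτ.measurableSpaceOld ≤ mΩ)
    (V : ℝ → ℝ) (hVconv : ConvexOn ℝ (Set.Ioi 0) V) (hVdec : AntitoneOn V (Set.Ioi 0))
    (Z : Ω → ℝ) (hZmeas : Measurable Z) (hZpos : ∀ᵐ ω ∂P, 0 < Z ω)
    (𝒴 : Set (Ω → ℝ)) (h𝒴ne : 𝒴.Nonempty)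
    (h𝒴pos : ∀ Y ∈ 𝒴, Measurable Y ∧ ∀ᵐ ω ∂P, 0 < Y ω)
    (h𝒴conv : ∀ Y₁ ∈ 𝒴, ∀ Y₂ ∈ 𝒴, ∀ g : Ω → ℝ, Measurable[hτ.measurableSpaceOld] g →
      (∀ ω, 0 ≤ g ω ∧ g ω ≤ 1) → (fun ω => g ω * Y₁ ω + (1 - g ω) * Y₂ ω) ∈ 𝒴)
    (η₁ η₂ : Ω → ℝ)
    (hη₁ : Measurable[hτ.measurableSpaceOld] η₁ ∧ ∀ᵐ ω ∂P, 0 < η₁ ω)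
    (hη₂ : Measurable[hτ.measurableSpaceOld] η₂ ∧ ∀ᵐ ω ∂P, 0 < η₂ ω)
    (A : Set Ω) (hA : MeasurableSet[hτ.measurableSpaceOld] A)
    -- all the conditional expectations involved are well-defined (integrability)
    (hint₁ : ∀ Y ∈ 𝒴, Integrable (fun ω => V (Z ω * η₁ ω * Y ω)) P)
    (hint₂ : ∀ Y ∈ 𝒴, Integrable (fun ω => V (Z ω * η₂ ω * Y ω)) P)
    (hintc : ∀ Y ∈ 𝒴, Integrable
      (fun ω => V (Z ω * (A.indicator η₁ ω + Aᶜ.indicator η₂ ω) * Y ω)) P)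
    (v₁ v₂ vc : Ω → ℝ)
    -- v₁ = essinf_{Y ∈ 𝒴} E[V(Zη₁Y)|ℱ_τ]
    (hv₁lb : ∀ Y ∈ 𝒴, ∀ᵐ ω ∂P,
      v₁ ω ≤ condExp hτ.measurableSpaceOld P (fun ω' => V (Z ω' * η₁ ω' * Y ω')) ω)
    (hv₁glb : ∀ w : Ω → ℝ, Measurable[hτ.measurableSpaceOld] w →
      (∀ Y ∈ 𝒴, ∀ᵐ ω ∂P,
        w ω ≤ condExp hτ.measurableSpaceOld P (fun ω' => V (Z ω' * η₁ ω' * Y ω')) ω) →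
      ∀ᵐ ω ∂P, w ω ≤ v₁ ω)
    -- v₂ = essinf_{Y ∈ 𝒴} E[V(Zη₂Y)|ℱ_τ]
    (hv₂lb : ∀ Y ∈ 𝒴, ∀ᵐ ω ∂P,
      v₂ ω ≤ condExp hτ.measurableSpaceOld P (fun ω' => V (Z ω' * η₂ ω' * Y ω')) ω)
    (hv₂glb : ∀ w : Ω → ℝ, Measurable[hτ.measurableSpaceOld] w →
      (∀ Y ∈ 𝒴, ∀ᵐ ω ∂P,
        w ω ≤ condExp hτ.measurableSpaceOld P (fun ω' => V (Z ω' * η₂ ω' * Y ω')) ω) →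
      ∀ᵐ ω ∂P, w ω ≤ v₂ ω)
    -- vc = essinf_{Y ∈ 𝒴} E[V(Z(1_A η₁ + 1_{Aᶜ} η₂)Y)|ℱ_τ]
    (hvclb : ∀ Y ∈ 𝒴, ∀ᵐ ω ∂P,
      vc ω ≤ condExp hτ.measurableSpaceOld P
        (fun ω' => V (Z ω' * (A.indicator η₁ ω' + Aᶜ.indicator η₂ ω') * Y ω')) ω)
    (hvcglb : ∀ w : Ω → ℝ, Measurable[hτ.measurableSpaceOld] w →
      (∀ Y ∈ 𝒴, ∀ᵐ ω ∂P,
        w ω ≤ condExp hτ.measurableSpaceOld P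
          (fun ω' => V (Z ω' * (A.indicator η₁ ω' + Aᶜ.indicator η₂ ω') * Y ω')) ω) →
      ∀ᵐ ω ∂P, w ω ≤ vc ω) :
    vc =ᵐ[P] fun ω => A.indicator v₁ ω + Aᶜ.indicator v₂ ω :=
  stmt17_general P ℱ τ hτ hle V Z 𝒴 h𝒴ne η₁ η₂ A hA hint₁ hint₂ v₁ v₂ vc hv₁lb hv₁glb hv₂lb hv₂glb
    hvclb hvcglb
end
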